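/- arXiv:2402.13097 — 3 statements merged into one kernel-verified Lean document; each statement's English description precedes it below -/
import Mathlib

section
/- Let Γ₁ = (u →^p x →^q v) be a path of length 2 in the Bruhat graph B(𝔖_n), and let Γ₂ = (u →^s y →^t v) be its flip. Then: (1) if p and q commute, then s = q and t = p; (2) if p = (a,b) and q = (a,c), then: if a < b < c or a > b > c, then s = (b,c) and t = (a,b); if a < c < b or a > c > b, then s = (a,c) and t = (b,c); if b < a < c or b > a > c, then s = (a,c) and t = (b,c) in case u⁻¹(b) < u⁻¹(a) < u⁻¹(c) or u⁻¹(c) < u⁻¹(a) < u⁻¹(b), and s = (b,c) and t = (a,b) otherwise. -/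
open MvPolynomial

/-- The symmetric group `𝔖ₙ`, realized as permutations of `Fin n`. -/
abbrev Pm (n : ℕ) := Equiv.Perm (Fin n)

/-- The Coxeter length of a permutation: its number of inversions. -/
def len {n : ℕ} (w : Pm n) : ℕ :=
  (Finset.univ.filter fun q : Fin n × Fin n => q.1 < q.2 ∧ w q.2 < w q.1).card

/-- Edges of the Bruhat graph `B(𝔖ₙ)`: `a → b` iff `b * a⁻¹` is a transposition and
`ℓ(a) < ℓ(b)`.  The label of the edge is `b * a⁻¹`. -/
def BEdge {n : ℕ} (a b : Pm n) : Prop :=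
  (b * a⁻¹).IsSwap ∧ len a < len b

/-- Bruhat order: `u ≤ v` iff there is a directed path from `u` to `v` in the Bruhat graph. -/
def bruhatLE {n : ℕ} : Pm n → Pm n → Prop := Relation.ReflTransGen BEdge

/-- Strict Bruhat order. -/
def bruhatLT {n : ℕ} (a b : Pm n) : Prop := bruhatLE a b ∧ a ≠ b

/-- Covering relation of Bruhat order. -/
def bruhatCov {n : ℕ} (a b : Pm n) : Prop :=
  bruhatLT a b ∧ ∀ z, bruhatLT a z → bruhatLT z b → False

/-- A path of length `h` from `u` to `v` in the Bruhat graph, encoded as a function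
`ℕ → 𝔖ₙ` normalized to be constantly `v` from time `h` on. -/
def IsPath (n h : ℕ) (u v : Pm n) (p : ℕ → Pm n) : Prop :=
  p 0 = u ∧ (∀ j, h ≤ j → p j = v) ∧ ∀ i, i < h → BEdge (p i) (p (i + 1))

/-- The `i`-th label (`0 ≤ i ≤ h-1`) of a path. -/
def lab {n : ℕ} (p : ℕ → Pm n) (i : ℕ) : Pm n := p (i + 1) * (p i)⁻¹

/-- `q` is obtained from `p` by the `i`-th flip (`1 ≤ i ≤ h-1`): they differ exactly at
position `i`. -/
def FlipAt {n : ℕ} (h i : ℕ) (p q : ℕ → Pm n) : Prop :=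
  0 < i ∧ i < h ∧ p i ≠ q i ∧ ∀ j, j ≠ i → p j = q j

/-- One application of a flip operator on paths of length `h` from `u` to `v`. -/
def FlipStep (n h : ℕ) (u v : Pm n) (p q : ℕ → Pm n) : Prop :=
  IsPath n h u v p ∧ IsPath n h u v q ∧ ∃ i, FlipAt h i p q

/-- `F` is an `h`-flipclass of paths from `u` to `v`: an orbit of the group generated by
the flip operators, i.e. a connected component under single flips. -/
def IsFlipclass (n h : ℕ) (u v : Pm n) (F : Set (ℕ → Pm n)) : Prop :=
  ∃ p, IsPath n h u v p ∧ F = {q | Relation.ReflTransGen (FlipStep n h u v) p q}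

/-- Vertex set of the support graph `S_F`. -/
def SV (n h : ℕ) (F : Set (ℕ → Pm n)) : Set (Pm n) :=
  {a | ∃ p ∈ F, ∃ i, i ≤ h ∧ p i = a}

/-- Edge relation of the support graph `S_F` (labels are determined: `b * a⁻¹`). -/
def SE (n h : ℕ) (F : Set (ℕ → Pm n)) (a b : Pm n) : Prop :=
  ∃ p ∈ F, ∃ i, i < h ∧ p i = a ∧ p (i + 1) = b

/-- Vertex set of the time-support graph `TS_F`. -/
def TSV (n h : ℕ) (F : Set (ℕ → Pm n)) : Set (Pm n × ℕ) :=
  {x | x.2 ≤ h ∧ ∃ p ∈ F, p x.2 = x.1}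

/-- Edge relation of the time-support graph `TS_F`. -/
def TSE (n h : ℕ) (F : Set (ℕ → Pm n)) (x y : Pm n × ℕ) : Prop :=
  x.2 < h ∧ y.2 = x.2 + 1 ∧ ∃ p ∈ F, p x.2 = x.1 ∧ p (x.2 + 1) = y.1

/-- In-degree of a vertex of `TS_F`. -/
noncomputable def indeg (n h : ℕ) (F : Set (ℕ → Pm n)) (x : Pm n × ℕ) : ℕ :=
  Set.ncard {w | TSE n h F w x}

/-- Out-degree of a vertex of `TS_F`. -/
noncomputable def outdeg (n h : ℕ) (F : Set (ℕ → Pm n)) (x : Pm n × ℕ) : ℕ :=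
  Set.ncard {w | TSE n h F x w}

/-- The `t`-vector of `F`: `tᵢ` is the number of vertices of `TS_F` at time `i`. -/
noncomputable def tvec (n h : ℕ) (F : Set (ℕ → Pm n)) (i : ℕ) : ℕ :=
  Set.ncard {a : Pm n | (a, i) ∈ TSV n h F}

lemma TSV_finite (n h : ℕ) (F : Set (ℕ → Pm n)) : (TSV n h F).Finite :=
  Set.Finite.subset (Set.finite_univ.prod (Set.finite_Iic h))
    (fun _ hx => Set.mem_prod.mpr ⟨Set.mem_univ _, hx.1⟩)

/-- The `ι`-polynomial of `F`:
`ι_F(x,y,t) = Σ_{(a,i) ∈ V(TS_F)} x^indeg(a,i) y^outdeg(a,i) t^i`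
(the variables `x, y, t` are `X 0, X 1, X 2`). -/
noncomputable def iota (n h : ℕ) (F : Set (ℕ → Pm n)) : MvPolynomial (Fin 3) ℤ :=
  ∑ x ∈ (TSV_finite n h F).toFinset,
    X 0 ^ indeg n h F x * X 1 ^ outdeg n h F x * X 2 ^ x.2

/-- A reflection ordering on the transpositions of `𝔖ₙ`: a total order `⪯` on the set of
transpositions such that for all `a < b < c`, either
`(a,b) ⪯ (a,c) ⪯ (b,c)` or `(b,c) ⪯ (a,c) ⪯ (a,b)`. -/
structure ReflOrder (n : ℕ) where
  le : Pm n → Pm n → Prop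
  le_refl : ∀ t : Pm n, t.IsSwap → le t t
  le_antisymm : ∀ s t : Pm n, s.IsSwap → t.IsSwap → le s t → le t s → s = t
  le_trans : ∀ r s t : Pm n, r.IsSwap → s.IsSwap → t.IsSwap → le r s → le s t → le r t
  le_total : ∀ s t : Pm n, s.IsSwap → t.IsSwap → le s t ∨ le t s
  reflection_cond : ∀ a b c : Fin n, a < b → b < c →
    (le (Equiv.swap a b) (Equiv.swap a c) ∧ le (Equiv.swap a c) (Equiv.swap b c)) ∨
    (le (Equiv.swap b c) (Equiv.swap a c) ∧ le (Equiv.swap a c) (Equiv.swap a b))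

/-- A path (of length `h`) is increasing w.r.t. an order `le` on transpositions if its
sequence of labels is weakly increasing. -/
def IncreasingRel {n : ℕ} (h : ℕ) (le : Pm n → Pm n → Prop) (p : ℕ → Pm n) : Prop :=
  ∀ i, i + 1 < h → le (lab p i) (lab p (i + 1))

/-- The number of increasing paths (w.r.t. a reflection ordering) in `F`. -/
noncomputable def cnt (n h : ℕ) (F : Set (ℕ → Pm n)) (ord : ReflOrder n) : ℕ :=
  Set.ncard {p ∈ F | IncreasingRel h ord.le p}

/-- Lexicographic comparison of the label sequences of two paths of length `h`. -/
def LabelLexLe {n : ℕ} (h : ℕ) (le : Pm n → Pm n → Prop) (p q : ℕ → Pm n) : Prop :=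
  (∀ i, i < h → lab p i = lab q i) ∨
  ∃ i, i < h ∧ (∀ j, j < i → lab p j = lab q j) ∧ lab p i ≠ lab q i ∧ le (lab p i) (lab q i)

/-- A path of length `h` from `(u,0)` to `(v,h)` in the time-support graph `TS_F`,
encoded by its sequence of permutation components. -/
def IsTSPath (n h : ℕ) (F : Set (ℕ → Pm n)) (u v : Pm n) (y : ℕ → Pm n) : Prop :=
  y 0 = u ∧ (∀ j, h ≤ j → y j = v) ∧ ∀ i, i < h → TSE n h F (y i, i) (y (i + 1), i + 1)

/-- The set of labels of the paths of `F`. -/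
def labelSet (n h : ℕ) (F : Set (ℕ → Pm n)) : Set (Pm n) :=
  {t | ∃ p ∈ F, ∃ i, i < h ∧ lab p i = t}

/-- Lexicographic order on the transpositions of `𝔖ₙ`:
`(a,b) ⪯ (c,d)` (with `a<b`, `c<d`) iff `a < c`, or `a = c` and `b ≤ d`. -/
def lexLe (n : ℕ) (s t : Pm n) : Prop :=
  ∃ a b c d : Fin n, a < b ∧ c < d ∧ s = Equiv.swap a b ∧ t = Equiv.swap c d ∧
    (a < c ∨ (a = c ∧ b ≤ d))

/-- Isomorphism of flipclasses: a pair `(f, g)` where `f` is a flips-preserving bijection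
on the underlying permutations (inducing a bijection of the path sets), and `g` is a
label-matching bijection of the label sets that is order preserving w.r.t. the
lexicographic orders. -/
def FlipclassIso (n m h : ℕ) (F : Set (ℕ → Pm n)) (F' : Set (ℕ → Pm m)) : Prop :=
  ∃ f : Pm n → Pm m, ∃ g : Pm n → Pm m,
    Set.BijOn f (SV n h F) (SV m h F') ∧
    Set.BijOn (fun p => f ∘ p) F F' ∧
    (∀ p ∈ F, ∀ q ∈ F, ∀ i, FlipAt h i p q → FlipAt h i (f ∘ p) (f ∘ q)) ∧
    Set.BijOn g (labelSet n h F) (labelSet m h F') ∧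
    (∀ p ∈ F, ∀ i, i < h → g (lab p i) = lab (f ∘ p) i) ∧
    (∀ s t, s ∈ labelSet n h F → t ∈ labelSet n h F → lexLe n s t → lexLe m (g s) (g t))

/-- `G(Γ)` is connected: any two letters moved by some label of the path `p` are joined
by a chain of labels. -/
def IrredPath (n k : ℕ) (p : ℕ → Pm n) : Prop :=
  ∀ a b : Fin n, (∃ i, i < k ∧ lab p i a ≠ a) → (∃ i, i < k ∧ lab p i b ≠ b) →
    Relation.ReflTransGen (fun x y => ∃ i, i < k ∧ lab p i = Equiv.swap x y) a b

/-- The set of positions of the values in `E` in the one-line notation of `w`,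
i.e. `w⁻¹(E)`. -/
def posSet {n : ℕ} (w : Pm n) (E : Finset (Fin n)) : Finset (Fin n) := E.image ⇑w.symm

lemma mem_posSet {n : ℕ} {w : Pm n} {E : Finset (Fin n)} {x : Fin n} :
    x ∈ posSet w E ↔ w x ∈ E := by
  constructor
  · intro hx
    rcases Finset.mem_image.mp hx with ⟨y, hy, rfl⟩
    simpa using hy
  · intro hx
    exact Finset.mem_image.mpr ⟨w x, hx, by simp⟩

lemma posSet_card {n : ℕ} (w : Pm n) (E : Finset (Fin n)) : (posSet w E).card = E.card :=
  Finset.card_image_of_injective _ w.symm.injective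

/-- The "pattern" map `r_E : 𝔖ₙ → 𝔖ₘ` (`|E| = m`): delete from the one-line notation of
`w` the values not in `E`, and renumber the values in `E` via the order preserving
bijection `E → [m]`. -/
noncomputable def rE (n m : ℕ) (E : Finset (Fin n)) (hm : E.card = m) (w : Pm n) : Pm m :=
  (((posSet w E).orderIsoOfFin (by rw [posSet_card, hm])).toEquiv.trans
    (⟨fun x => ⟨w x.1, mem_posSet.mp x.2⟩,
      fun y => ⟨w.symm y.1, mem_posSet.mpr (by simp [y.2])⟩,
      fun x => Subtype.ext (by simp),
      fun y => Subtype.ext (by simp)⟩ :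
        {x // x ∈ posSet w E} ≃ {y // y ∈ E})).trans (E.orderIsoOfFin hm).toEquiv.symm

/-- `r_E` applied to each vertex of a path. -/
noncomputable def rEPath (n m : ℕ) (E : Finset (Fin n)) (hm : E.card = m)
    (p : ℕ → Pm n) : ℕ → Pm m := fun j => rE n m E hm (p j)

/-- The total order `⪯_{r_E}` induced on the transpositions of `𝔖ₘ` by a reflection
ordering of `𝔖ₙ` via the order preserving bijection `r_E⁻¹ : [m] → E`. -/
def inducedOrd (n m : ℕ) (ord : ReflOrder n) (E : Finset (Fin n)) (hm : E.card = m) :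
    Pm m → Pm m → Prop := fun s t =>
  ∃ a b c d : Fin m, a < b ∧ c < d ∧ s = Equiv.swap a b ∧ t = Equiv.swap c d ∧
    ord.le (Equiv.swap (↑(E.orderIsoOfFin hm a)) (↑(E.orderIsoOfFin hm b)))
           (Equiv.swap (↑(E.orderIsoOfFin hm c)) (↑(E.orderIsoOfFin hm d)))

/-- Isomorphism of (unlabelled, or labelled with determined labels) directed graphs. -/
def GraphIso {α β : Type*} (V1 : Set α) (E1 : α → α → Prop)
    (V2 : Set β) (E2 : β → β → Prop) : Prop :=
  ∃ φ : α → β, Set.BijOn φ V1 V2 ∧ ∀ x ∈ V1, ∀ y ∈ V1, (E1 x y ↔ E2 (φ x) (φ y))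

/-- Vertices of the `k`-crown: `u`, `a₁,…,a_k`, `b₁,…,b_k`, `v`. -/
def CrownV (k : ℕ) : Type := (Unit ⊕ Fin k) ⊕ (Fin k ⊕ Unit)

/-- Edges of the `k`-crown: `u → aᵢ`, `aᵢ → bᵢ`, `a_{i+1} → bᵢ` (indices mod `k`),
`bᵢ → v`. -/
def crownEdge (k : ℕ) : CrownV k → CrownV k → Prop
  | Sum.inl (Sum.inl _), Sum.inl (Sum.inr _) => True
  | Sum.inl (Sum.inr i), Sum.inr (Sum.inl j) => i.val = j.val ∨ i.val = (j.val + 1) % k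
  | Sum.inr (Sum.inl _), Sum.inr (Sum.inr _) => True
  | _, _ => False

/-- The set `W₁ · W₂` (internal direct product when supports are disjoint). -/
def dprod {n : ℕ} (W1 W2 : Subgroup (Pm n)) : Set (Pm n) :=
  {w | ∃ w1 ∈ W1, ∃ w2 ∈ W2, w = w1 * w2}

/-- A path in the subgraph of the Bruhat graph induced on the subset `X`. -/
def IsPathIn (n : ℕ) (X : Set (Pm n)) (h : ℕ) (u v : Pm n) (p : ℕ → Pm n) : Prop :=
  IsPath n h u v p ∧ ∀ j, p j ∈ X

/-- Flip step within the induced subgraph on `X`. -/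
def FlipStepIn (n : ℕ) (X : Set (Pm n)) (h : ℕ) (u v : Pm n) (p q : ℕ → Pm n) : Prop :=
  IsPathIn n X h u v p ∧ IsPathIn n X h u v q ∧ ∃ i, FlipAt h i p q

/-- Flipclass of paths in the induced subgraph on `X`. -/
def IsFlipclassIn (n : ℕ) (X : Set (Pm n)) (h : ℕ) (u v : Pm n)
    (F : Set (ℕ → Pm n)) : Prop :=
  ∃ p, IsPathIn n X h u v p ∧ F = {q | Relation.ReflTransGen (FlipStepIn n X h u v) p q}

/-- `Δ` (a path of length `k`, normalized) is the projection (deduplication) of the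
vertexwise-projected sequence `s` (defined on `0,…,hh`). -/
def IsProj (n hh k : ℕ) (s Δ : ℕ → Pm n) : Prop :=
  ∃ φ : ℕ → ℕ, Monotone φ ∧ φ 0 = 0 ∧ (∀ j, hh ≤ j → φ j = k) ∧
    (∀ j, j < hh →
      (s (j + 1) = s j ∧ φ (j + 1) = φ j) ∨ (s (j + 1) ≠ s j ∧ φ (j + 1) = φ j + 1)) ∧
    (∀ j, j ≤ hh → s j = Δ (φ j)) ∧ ∀ j, k ≤ j → Δ j = Δ k
section AuxFlipRule
open Equiv Finset

variable {n : ℕ}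

lemma len_swap_lt {n : ℕ} (u : Pm n) (a b : Fin n) (hab : a < b) (hpos : u⁻¹ b < u⁻¹ a) :
    len (Equiv.swap a b * u) < len u := by
  set i := u⁻¹ b with hi
  set j := u⁻¹ a with hj
  have hij : i < j := hpos
  have hui : u i = b := by simp [hi]
  have huj : u j = a := by simp [hj]
  have hiju : i ≠ j := ne_of_lt hij
  set σ := Equiv.swap i j with hσ
  have hfact : Equiv.swap a b * u = u * σ := by
    ext z
    simp only [Equiv.Perm.mul_apply, hσ]
    rcases eq_or_ne z i with rfl | hzi
    · rw [swap_apply_left, huj, hui, swap_apply_right]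
    rcases eq_or_ne z j with rfl | hzj
    · rw [swap_apply_right, hui, huj, swap_apply_left]
    · rw [swap_apply_of_ne_of_ne hzi hzj,
        swap_apply_of_ne_of_ne (fun h => hzj (by rw [hj, ← h]; simp))
          (fun h => hzi (by rw [hi, ← h]; simp))]
  rw [hfact]
  set S : Pm n → Finset (Fin n × Fin n) :=
    fun w => Finset.univ.filter fun q : Fin n × Fin n => q.1 < q.2 ∧ w q.2 < w q.1 with hS
  have hmem : ∀ (w : Pm n) (q : Fin n × Fin n), q ∈ S w ↔ q.1 < q.2 ∧ w q.2 < w q.1 := by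
    intro w q; simp [hS]
  -- the map
  set F : Fin n × Fin n → Fin n × Fin n := fun q =>
    if u (max (σ q.1) (σ q.2)) < u (min (σ q.1) (σ q.2)) then
      (min (σ q.1) (σ q.2), max (σ q.1) (σ q.2)) else q with hF
  have hσi : σ i = j := swap_apply_left i j
  have hσj : σ j = i := swap_apply_right i j
  have hσo : ∀ z, z ≠ i → z ≠ j → σ z = z := fun z h1 h2 => swap_apply_of_ne_of_ne h1 h2
  have hσσ : ∀ z, σ (σ z) = z := fun z => swap_apply_self i j z
  -- ordering of images for source elements
  have hbranch : ∀ q ∈ S (u * σ),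
      (σ q.1 < σ q.2 ∧ F q = (σ q.1, σ q.2)) ∨ (σ q.2 < σ q.1 ∧ F q = q) := by
    intro q hq
    rw [hmem] at hq
    obtain ⟨hq12, hval⟩ := hq
    simp only [Equiv.Perm.mul_apply] at hval
    rcases lt_or_gt_of_ne (fun h : σ q.1 = σ q.2 => absurd (σ.injective h) (ne_of_lt hq12))
      with h | h
    · left
      refine ⟨h, ?_⟩
      simp [hF, max_eq_right h.le, min_eq_left h.le, hval]
    · right
      refine ⟨h, ?_⟩
      have : ¬ u (max (σ q.1) (σ q.2)) < u (min (σ q.1) (σ q.2)) := by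
        rw [max_eq_left h.le, min_eq_right h.le]
        exact fun hc => lt_asymm hc hval
      simp [hF, this]
  have hne_src : (i, j) ∉ S (u * σ) := by
    rw [hmem]
    simp only [Equiv.Perm.mul_apply, hσi, hσj, hui, huj]
    exact fun h => absurd h.2 (not_lt.mpr hab.le)
  have hmaps : ∀ q ∈ S (u * σ), F q ∈ (S u).erase (i, j) := by
    intro q hq
    have hq' := hq
    rw [hmem] at hq'
    obtain ⟨hq12, hval⟩ := hq'
    simp only [Equiv.Perm.mul_apply] at hval
    rcases hbranch q hq with ⟨hlt, hFq⟩ | ⟨hlt, hFq⟩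
    · rw [hFq, Finset.mem_erase, hmem]
      refine ⟨?_, hlt, hval⟩
      intro hc
      have h1 : σ q.1 = i := (Prod.mk.injEq _ _ _ _ ▸ hc).1
      have h2 : σ q.2 = j := (Prod.mk.injEq _ _ _ _ ▸ hc).2
      have e1 : q.1 = j := by rw [← hσσ q.1, h1, hσi]
      have e2 : q.2 = i := by rw [← hσσ q.2, h2, hσj]
      omega
    · rw [hFq, Finset.mem_erase, hmem]
      -- q.2 < q.1 under σ : classify
      constructor
      · intro hc
        exact hne_src (hc ▸ hq)
      refine ⟨hq12, ?_⟩
      -- cases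
      rcases eq_or_ne q.1 i with h1i | h1i
      · -- q.1 = i, σ q.1 = j
        rcases eq_or_ne q.2 j with h2j | h2j
        · exfalso
          apply hne_src
          have hqij : q = (i, j) := by
            rcases q with ⟨q1, q2⟩; simp_all
          exact hqij ▸ hq
        · have h2i : q.2 ≠ i := by omega
          have hs2 : σ q.2 = q.2 := hσo _ h2i h2j
          rw [h1i, hσi, hs2] at hval
          rw [h1i, hui, huj] at *
          calc u q.2 < a := hval
            _ < b := hab
      · rcases eq_or_ne q.1 j with h1j | h1j
        · exfalso
          have hs1 : σ q.1 = i := by rw [h1j, hσj]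
          rw [hs1] at hlt
          have h2i : q.2 ≠ i := by omega
          have h2j : q.2 ≠ j := by omega
          rw [hσo _ h2i h2j] at hlt
          omega
        · have hs1 : σ q.1 = q.1 := hσo _ h1i h1j
          rcases eq_or_ne q.2 i with h2i | h2i
          · exfalso
            rw [hs1, h2i, hσi] at hlt
            omega
          rcases eq_or_ne q.2 j with h2j | h2j
          · rw [hs1, h2j, hσj, hui] at hval
            rw [h2j, huj]
            calc a < b := hab
              _ < u q.1 := hval
          · exfalso
            rw [hs1, hσo _ h2i h2j] at hlt
            omega
  have hinj : Set.InjOn F (S (u * σ)) := by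
    intro q hq r hr hqr
    rcases hbranch q hq with ⟨hltq, hFq⟩ | ⟨hltq, hFq⟩ <;>
      rcases hbranch r hr with ⟨hltr, hFr⟩ | ⟨hltr, hFr⟩
    · rw [hFq, hFr] at hqr
      have h1 : σ q.1 = σ r.1 := (Prod.mk.injEq _ _ _ _ ▸ hqr).1
      have h2 : σ q.2 = σ r.2 := (Prod.mk.injEq _ _ _ _ ▸ hqr).2
      exact Prod.ext (σ.injective h1) (σ.injective h2)
    · -- q chosen, r fallback: F q = (σ q.1, σ q.2) = r
      exfalso
      rw [hFq, hFr] at hqr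
      have h1 : r.1 = σ q.1 := by rw [← hqr]
      have h2 : r.2 = σ q.2 := by rw [← hqr]
      rw [h1, h2, hσσ, hσσ] at hltr
      have hq12 := ((hmem _ q).mp hq).1
      omega
    · exfalso
      rw [hFq, hFr] at hqr
      have h1 : q.1 = σ r.1 := by rw [hqr]
      have h2 : q.2 = σ r.2 := by rw [hqr]
      rw [h1, h2, hσσ, hσσ] at hltq
      have hr12 := ((hmem _ r).mp hr).1
      omega
    · rw [hFq, hFr] at hqr; exact hqr
  have hcard : (S (u * σ)).card ≤ ((S u).erase (i, j)).card :=
    Finset.card_le_card_of_injOn F hmaps hinj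
  have hijmem : (i, j) ∈ S u := by
    rw [hmem]
    exact ⟨hij, by rw [hui, huj]; exact hab⟩
  have herase : ((S u).erase (i, j)).card = (S u).card - 1 := Finset.card_erase_of_mem hijmem
  have hpos' : 0 < (S u).card := Finset.card_pos.mpr ⟨_, hijmem⟩
  show (S (u * σ)).card < (S u).card
  omega


lemma len_swap_gt (u : Pm n) (a b : Fin n) (hab : a < b) (hpos : u⁻¹ a < u⁻¹ b) :
    len u < len (Equiv.swap a b * u) := by
  have h1 : (Equiv.swap a b * u)⁻¹ b = u⁻¹ a := by
    rw [mul_inv_rev, swap_inv, Equiv.Perm.mul_apply, swap_apply_right]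
  have h2 : (Equiv.swap a b * u)⁻¹ a = u⁻¹ b := by
    rw [mul_inv_rev, swap_inv, Equiv.Perm.mul_apply, swap_apply_left]
  have h3 := len_swap_lt (Equiv.swap a b * u) a b hab (by rw [h1, h2]; exact hpos)
  rwa [← mul_assoc, swap_mul_self, one_mul] at h3

lemma pos_of_len_lt (u : Pm n) (a b : Fin n) (hab : a < b)
    (h : len u < len (Equiv.swap a b * u)) : u⁻¹ a < u⁻¹ b := by
  by_contra h'
  have hne : u⁻¹ b ≠ u⁻¹ a := fun e => (ne_of_lt hab) (u⁻¹.injective e).symm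
  have hlt : u⁻¹ b < u⁻¹ a := lt_of_le_of_ne (not_lt.mp h') hne
  exact absurd h (not_lt.mpr (le_of_lt (len_swap_lt u a b hab hlt)))

lemma edge_pos {z zz : Pm n} {d e : Fin n} (hde : d < e)
    (hzz : Equiv.swap d e * z = zz) (hlen : len z < len zz) : z⁻¹ d < z⁻¹ e :=
  pos_of_len_lt z d e hde (hzz ▸ hlen)

lemma inv_apply_swap_mul (z : Pm n) (d e f : Fin n) :
    (Equiv.swap d e * z)⁻¹ f = z⁻¹ (Equiv.swap d e f) := by
  rw [mul_inv_rev, swap_inv, Equiv.Perm.mul_apply]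

lemma disj_of_comm {a b c d : Fin n} (hab : a ≠ b) (hcd : c ≠ d)
    (hcomm : Equiv.swap a b * Equiv.swap c d = Equiv.swap c d * Equiv.swap a b)
    (hne : Equiv.swap a b ≠ Equiv.swap c d) : c ≠ a ∧ c ≠ b ∧ d ≠ a ∧ d ≠ b := by
  have hca : c ≠ a := by
    intro h
    rw [h] at hcomm hne hcd
    have hbd : b ≠ d := fun h' => hne (by rw [h'])
    have h2 := Equiv.ext_iff.mp hcomm b
    simp only [Equiv.Perm.mul_apply] at h2
    rw [swap_apply_of_ne_of_ne hab.symm hbd, swap_apply_right, swap_apply_left] at h2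
    exact hcd h2
  have hcb : c ≠ b := by
    intro h
    rw [h] at hcomm hne hcd
    have hda : d ≠ a := fun h' => hne (by rw [h']; exact swap_comm a b)
    have h2 := Equiv.ext_iff.mp hcomm a
    simp only [Equiv.Perm.mul_apply] at h2
    rw [swap_apply_of_ne_of_ne hab hda.symm, swap_apply_left, swap_apply_left] at h2
    exact hcd h2
  have hda : d ≠ a := by
    intro h
    rw [h] at hcomm hcd
    have h2 := Equiv.ext_iff.mp hcomm b
    simp only [Equiv.Perm.mul_apply] at h2
    rw [swap_apply_of_ne_of_ne hcb.symm hab.symm, swap_apply_right, swap_apply_right] at h2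
    exact hcd h2.symm
  have hdb : d ≠ b := by
    intro h
    rw [h] at hcomm hcd
    have h2 := Equiv.ext_iff.mp hcomm a
    simp only [Equiv.Perm.mul_apply] at h2
    rw [swap_apply_of_ne_of_ne hca.symm hab, swap_apply_left, swap_apply_right] at h2
    exact hcd h2.symm
  exact ⟨hca, hcb, hda, hdb⟩



lemma swap_invol {s : Pm n} (hs : s.IsSwap) (z : Fin n) : s (s z) = z := by
  obtain ⟨e, f, hef, rfl⟩ := hs
  exact swap_apply_self e f z

lemma isSwap_eq_swap {s : Pm n} (hs : s.IsSwap) {z : Fin n} (hz : s z ≠ z) :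
    s = Equiv.swap z (s z) := by
  obtain ⟨e, f, hef, rfl⟩ := hs
  rcases (swap_apply_ne_self_iff.mp hz).2 with rfl | rfl
  · rw [swap_apply_left]
  · rw [swap_apply_right, swap_comm]

lemma isSwap_contra {t : Pm n} (ht : t.IsSwap) {z1 z2 z3 : Fin n}
    (h1 : t z1 = z2) (h2 : t z2 = z3) (h : z3 ≠ z1) : False := by
  apply h
  rw [← h1] at h2
  rw [← h2, swap_invol ht]

lemma triple_id {a b c : Fin n} (hab : a ≠ b) (hac : a ≠ c) (hbc : b ≠ c) :
    Equiv.swap a c * Equiv.swap a b * Equiv.swap b c = Equiv.swap a b := by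
  ext z
  simp only [Equiv.Perm.mul_apply]
  rcases eq_or_ne z a with rfl | hza
  · simp [swap_apply_def, hab, hac, hbc, hab.symm, hac.symm, hbc.symm]
  rcases eq_or_ne z b with rfl | hzb
  · simp [swap_apply_def, hab, hac, hbc, hab.symm, hac.symm, hbc.symm]
  rcases eq_or_ne z c with rfl | hzc
  · simp [swap_apply_def, hab, hac, hbc, hab.symm, hac.symm, hbc.symm]
  · simp [swap_apply_def, hza, hzb, hzc]

lemma swap_disj_comm {a b c d : Fin n} (hca : c ≠ a) (hcb : c ≠ b) (hda : d ≠ a)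
    (hdb : d ≠ b) : Equiv.swap a b * Equiv.swap c d = Equiv.swap c d * Equiv.swap a b := by
  ext z
  simp only [Equiv.Perm.mul_apply]
  rcases eq_or_ne z a with rfl | hza
  · simp [swap_apply_def, hca, hcb, hda, hdb, hca.symm, hcb.symm, hda.symm, hdb.symm]
  rcases eq_or_ne z b with rfl | hzb
  · simp [swap_apply_def, hca, hcb, hda, hdb, hca.symm, hcb.symm, hda.symm, hdb.symm]
  rcases eq_or_ne z c with rfl | hzc
  · simp [swap_apply_def, hca, hcb, hda, hdb, hca.symm, hcb.symm, hda.symm, hdb.symm]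
  rcases eq_or_ne z d with rfl | hzd
  · simp [swap_apply_def, hca, hcb, hda, hdb, hca.symm, hcb.symm, hda.symm, hdb.symm]
  · simp [swap_apply_def, hza, hzb, hzc, hzd]

lemma classify2 {a b c : Fin n} (hab : a ≠ b) (hac : a ≠ c) (hbc : b ≠ c)
    {s t : Pm n} (hs : s.IsSwap) (ht : t.IsSwap) (hsp : s ≠ Equiv.swap a b)
    (hts : t * s = Equiv.swap a c * Equiv.swap a b) :
    (s = Equiv.swap a c ∧ t = Equiv.swap b c) ∨
      (s = Equiv.swap b c ∧ t = Equiv.swap a b) := by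
  have hss : s * s = 1 := by obtain ⟨e, f, hef, rfl⟩ := hs; exact swap_mul_self e f
  have hT : t = Equiv.swap a c * Equiv.swap a b * s := by
    rw [← hts, mul_assoc, hss, mul_one]
  have hTz : ∀ z, t z = Equiv.swap a c (Equiv.swap a b (s z)) := by
    intro z; rw [hT]; rfl
  rcases eq_or_ne (s a) a with ha | ha
  · rcases eq_or_ne (s b) b with hb | hb
    · rcases eq_or_ne (s c) c with hc | hc
      · exfalso
        obtain ⟨e, f, hef, hsef⟩ := hs
        have hse : s e = f := by rw [hsef, swap_apply_left]
        have hsf : s f = e := by rw [hsef, swap_apply_right]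
        have hea : e ≠ a := by intro h; subst h; rw [ha] at hse; exact hef hse
        have heb : e ≠ b := by intro h; subst h; rw [hb] at hse; exact hef hse
        have hfa : f ≠ a := by intro h; subst h; rw [ha] at hsf; exact hef hsf.symm
        have hfb : f ≠ b := by intro h; subst h; rw [hb] at hsf; exact hef hsf.symm
        have hfc : f ≠ c := by intro h; subst h; rw [hc] at hsf; exact hef hsf.symm
        have hta : t a = b := by
          rw [hTz, ha, swap_apply_left, swap_apply_of_ne_of_ne hab.symm hbc]
        have hte : t e = f := by
          rw [hTz, hse, swap_apply_of_ne_of_ne hfa hfb, swap_apply_of_ne_of_ne hfa hfc]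
        have htab : t = Equiv.swap a b := by
          have h' := isSwap_eq_swap ht (show t a ≠ a by rw [hta]; exact hab.symm)
          rwa [hta] at h'
        rw [htab, swap_apply_of_ne_of_ne hea heb] at hte
        exact hef hte
      · set g := s c with hg
        have hsg : s g = c := swap_invol hs c
        have hga : g ≠ a := by intro h; rw [h, ha] at hsg; exact hac hsg
        have hgb : g ≠ b := by intro h; rw [h, hb] at hsg; exact hbc hsg
        have hgc : g ≠ c := by rw [hg]; exact hc
        have htc : t c = g := by
          rw [hTz, ← hg, swap_apply_of_ne_of_ne hga hgb, swap_apply_of_ne_of_ne hga hgc]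
        have htg : t g = a := by
          rw [hTz, hsg, swap_apply_of_ne_of_ne hac.symm hbc.symm, swap_apply_right]
        exact (isSwap_contra ht htc htg hac).elim
    · set g := s b with hg
      have hsg : s g = b := swap_invol hs b
      have hga : g ≠ a := by intro h; rw [h, ha] at hsg; exact hab hsg
      have hgb : g ≠ b := by rw [hg]; exact hb
      rcases eq_or_ne g c with hgc | hgc
      · right
        have hseq : s = Equiv.swap b c := by
          have h' := isSwap_eq_swap hs hb
          rwa [← hg, hgc] at h'
        exact ⟨hseq, by rw [hT, hseq, triple_id hab hac hbc]⟩
      · have htb : t b = g := by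
          rw [hTz, ← hg, swap_apply_of_ne_of_ne hga hgb, swap_apply_of_ne_of_ne hga hgc]
        have htg : t g = c := by
          rw [hTz, hsg, swap_apply_right, swap_apply_left]
        exact (isSwap_contra ht htb htg hbc.symm).elim
  · set g := s a with hg
    have hsg : s g = a := swap_invol hs a
    have hga : g ≠ a := by rw [hg]; exact ha
    have hgb : g ≠ b := by
      intro h
      apply hsp
      have h' := isSwap_eq_swap hs ha
      rwa [← hg, h] at h'
    rcases eq_or_ne g c with hgc | hgc
    · left
      have hseq : s = Equiv.swap a c := by
        have h' := isSwap_eq_swap hs ha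
        rwa [← hg, hgc] at h'
      refine ⟨hseq, ?_⟩
      rw [hT, hseq]
      have h2 : Equiv.swap (Equiv.swap a c a) (Equiv.swap a c b) =
          Equiv.swap a c * Equiv.swap a b * (Equiv.swap a c)⁻¹ :=
        Equiv.swap_apply_apply _ a b
      rw [swap_inv, swap_apply_left, swap_apply_of_ne_of_ne hab.symm hbc] at h2
      rw [← h2, swap_comm]
    · have hta : t a = g := by
        rw [hTz, ← hg, swap_apply_of_ne_of_ne hga hgb, swap_apply_of_ne_of_ne hga hgc]
      have htg : t g = b := by
        rw [hTz, hsg, swap_apply_left, swap_apply_of_ne_of_ne hab.symm hbc]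
      exact (isSwap_contra ht hta htg hab.symm).elim

lemma classify1 {a b c d : Fin n} (hab : a ≠ b) (hcd : c ≠ d)
    (hca : c ≠ a) (hcb : c ≠ b) (hda : d ≠ a) (hdb : d ≠ b)
    {s t : Pm n} (hs : s.IsSwap) (ht : t.IsSwap) (hsp : s ≠ Equiv.swap a b)
    (hts : t * s = Equiv.swap c d * Equiv.swap a b) :
    s = Equiv.swap c d ∧ t = Equiv.swap a b := by
  have hss : s * s = 1 := by obtain ⟨e, f, hef, rfl⟩ := hs; exact swap_mul_self e f
  have hT : t = Equiv.swap c d * Equiv.swap a b * s := by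
    rw [← hts, mul_assoc, hss, mul_one]
  have hTz : ∀ z, t z = Equiv.swap c d (Equiv.swap a b (s z)) := by
    intro z; rw [hT]; rfl
  have ha : s a = a := by
    by_contra ha
    set g := s a with hg
    have hsg : s g = a := swap_invol hs a
    have hga : g ≠ a := by rw [hg]; exact ha
    have hgb : g ≠ b := by
      intro h
      apply hsp
      have h' := isSwap_eq_swap hs ha
      rwa [← hg, h] at h'
    have hseq : s = Equiv.swap a g := by
      have h' := isSwap_eq_swap hs ha; rwa [← hg] at h'
    rcases eq_or_ne g c with hgc | hgc
    · have hta : t a = d := by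
        rw [hTz, ← hg, hgc, swap_apply_of_ne_of_ne hca hcb, swap_apply_left]
      have hsd : s d = d := by
        rw [hseq, hgc]; exact swap_apply_of_ne_of_ne hda hcd.symm
      have htd : t d = c := by
        rw [hTz, hsd, swap_apply_of_ne_of_ne hda hdb, swap_apply_right]
      exact isSwap_contra ht hta htd hca
    rcases eq_or_ne g d with hgd | hgd
    · have hta : t a = c := by
        rw [hTz, ← hg, hgd, swap_apply_of_ne_of_ne hda hdb, swap_apply_right]
      have hsc : s c = c := by
        rw [hseq, hgd]; exact swap_apply_of_ne_of_ne hca hcd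
      have htc : t c = d := by
        rw [hTz, hsc, swap_apply_of_ne_of_ne hca hcb, swap_apply_left]
      exact isSwap_contra ht hta htc hda
    · have hta : t a = g := by
        rw [hTz, ← hg, swap_apply_of_ne_of_ne hga hgb,
          swap_apply_of_ne_of_ne hgc hgd]
      have htg : t g = b := by
        rw [hTz, hsg, swap_apply_left, swap_apply_of_ne_of_ne hcb.symm hdb.symm]
      exact isSwap_contra ht hta htg hab.symm
  have hb : s b = b := by
    by_contra hb
    set g := s b with hg
    have hsg : s g = b := swap_invol hs b
    have hgb : g ≠ b := by rw [hg]; exact hb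
    have hga : g ≠ a := by intro h; rw [h, ha] at hsg; exact hab hsg
    have hseq : s = Equiv.swap b g := by
      have h' := isSwap_eq_swap hs hb; rwa [← hg] at h'
    rcases eq_or_ne g c with hgc | hgc
    · have htb : t b = d := by
        rw [hTz, ← hg, hgc, swap_apply_of_ne_of_ne hca hcb, swap_apply_left]
      have hsd : s d = d := by
        rw [hseq, hgc]; exact swap_apply_of_ne_of_ne hdb hcd.symm
      have htd : t d = c := by
        rw [hTz, hsd, swap_apply_of_ne_of_ne hda hdb, swap_apply_right]
      exact isSwap_contra ht htb htd hcb
    rcases eq_or_ne g d with hgd | hgd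
    · have htb : t b = c := by
        rw [hTz, ← hg, hgd, swap_apply_of_ne_of_ne hda hdb, swap_apply_right]
      have hsc : s c = c := by
        rw [hseq, hgd]; exact swap_apply_of_ne_of_ne hcb hcd
      have htc : t c = d := by
        rw [hTz, hsc, swap_apply_of_ne_of_ne hca hcb, swap_apply_left]
      exact isSwap_contra ht htb htc hdb
    · have htb : t b = g := by
        rw [hTz, ← hg, swap_apply_of_ne_of_ne hga hgb,
          swap_apply_of_ne_of_ne hgc hgd]
      have htg : t g = a := by
        rw [hTz, hsg, swap_apply_right, swap_apply_of_ne_of_ne hca.symm hda.symm]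
      exact isSwap_contra ht htb htg hab
  rcases eq_or_ne (s c) c with hc | hc
  · exfalso
    rcases eq_or_ne (s d) d with hd | hd
    · obtain ⟨e, f, hef, hsef⟩ := hs
      have hse : s e = f := by rw [hsef, swap_apply_left]
      have hsf : s f = e := by rw [hsef, swap_apply_right]
      have hea : e ≠ a := by intro h; subst h; rw [ha] at hse; exact hef hse
      have heb : e ≠ b := by intro h; subst h; rw [hb] at hse; exact hef hse
      have hfa : f ≠ a := by intro h; subst h; rw [ha] at hsf; exact hef hsf.symm
      have hfb : f ≠ b := by intro h; subst h; rw [hb] at hsf; exact hef hsf.symm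
      have hfc : f ≠ c := by intro h; subst h; rw [hc] at hsf; exact hef hsf.symm
      have hfd : f ≠ d := by intro h; subst h; rw [hd] at hsf; exact hef hsf.symm
      have hta : t a = b := by
        rw [hTz, ha, swap_apply_left, swap_apply_of_ne_of_ne hcb.symm hdb.symm]
      have hte : t e = f := by
        rw [hTz, hse, swap_apply_of_ne_of_ne hfa hfb,
          swap_apply_of_ne_of_ne hfc hfd]
      have htab : t = Equiv.swap a b := by
        have h' := isSwap_eq_swap ht (show t a ≠ a by rw [hta]; exact hab.symm)
        rwa [hta] at h'
      rw [htab, swap_apply_of_ne_of_ne hea heb] at hte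
      exact hef hte
    · set g := s d with hg
      have hsg : s g = d := swap_invol hs d
      have hgd : g ≠ d := by rw [hg]; exact hd
      have hga : g ≠ a := by intro h; rw [h, ha] at hsg; exact hda hsg.symm
      have hgb : g ≠ b := by intro h; rw [h, hb] at hsg; exact hdb hsg.symm
      have hgc : g ≠ c := by intro h; rw [h, hc] at hsg; exact hcd hsg
      have htd : t d = g := by
        rw [hTz, ← hg, swap_apply_of_ne_of_ne hga hgb, swap_apply_of_ne_of_ne hgc hgd]
      have htg : t g = c := by
        rw [hTz, hsg, swap_apply_of_ne_of_ne hda hdb, swap_apply_right]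
      exact isSwap_contra ht htd htg hcd
  · set g := s c with hg
    have hsg : s g = c := swap_invol hs c
    have hgc : g ≠ c := by rw [hg]; exact hc
    have hga : g ≠ a := by intro h; rw [h, ha] at hsg; exact hca hsg.symm
    have hgb : g ≠ b := by intro h; rw [h, hb] at hsg; exact hcb hsg.symm
    rcases eq_or_ne g d with hgd | hgd
    · have hseq : s = Equiv.swap c d := by
        have h' := isSwap_eq_swap hs hc
        rwa [← hg, hgd] at h'
      refine ⟨hseq, ?_⟩
      rw [hT, hseq, mul_assoc, swap_disj_comm hca hcb hda hdb, ← mul_assoc,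
        swap_mul_self, one_mul]
    · exfalso
      have htc : t c = g := by
        rw [hTz, ← hg, swap_apply_of_ne_of_ne hga hgb,
          swap_apply_of_ne_of_ne hgc hgd]
      have htg : t g = d := by
        rw [hTz, hsg, swap_apply_of_ne_of_ne hca hcb, swap_apply_left]
      exact isSwap_contra ht htc htg hcd.symm


end AuxFlipRule

/-- Proposition 3.? (flip rule).  Let `Γ₁ = (u →ᵖ x →^q v)` be a path of length 2 in the
Bruhat graph and `Γ₂ = (u →ˢ y →ᵗ v)` its flip (the unique other path of length 2 from
`u` to `v`).  Then the labels `s = y u⁻¹`, `t = v y⁻¹` are as follows: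
(1) if `p` and `q` commute, `s = q` and `t = p`;
(2) if `p = (a,b)` and `q = (a,c)`, the stated case analysis holds. -/
theorem flip_rule (n : ℕ) (u x v y : Pm n)
    (h1 : BEdge u x) (h2 : BEdge x v) (h3 : BEdge u y) (h4 : BEdge y v) (hxy : y ≠ x) :
    (((x * u⁻¹) * (v * x⁻¹) = (v * x⁻¹) * (x * u⁻¹)) →
      y * u⁻¹ = v * x⁻¹ ∧ v * y⁻¹ = x * u⁻¹) ∧
    (∀ a b c : Fin n, a ≠ b → a ≠ c → b ≠ c →
      x * u⁻¹ = Equiv.swap a b → v * x⁻¹ = Equiv.swap a c →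
      (((a < b ∧ b < c) ∨ (c < b ∧ b < a)) →
          y * u⁻¹ = Equiv.swap b c ∧ v * y⁻¹ = Equiv.swap a b) ∧
      (((a < c ∧ c < b) ∨ (b < c ∧ c < a)) →
          y * u⁻¹ = Equiv.swap a c ∧ v * y⁻¹ = Equiv.swap b c) ∧
      (((b < a ∧ a < c) ∨ (c < a ∧ a < b)) →
        (((u⁻¹ b < u⁻¹ a ∧ u⁻¹ a < u⁻¹ c) ∨ (u⁻¹ c < u⁻¹ a ∧ u⁻¹ a < u⁻¹ b)) →
            y * u⁻¹ = Equiv.swap a c ∧ v * y⁻¹ = Equiv.swap b c) ∧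
        (¬((u⁻¹ b < u⁻¹ a ∧ u⁻¹ a < u⁻¹ c) ∨ (u⁻¹ c < u⁻¹ a ∧ u⁻¹ a < u⁻¹ b)) →
            y * u⁻¹ = Equiv.swap b c ∧ v * y⁻¹ = Equiv.swap a b))) := by
  have hfact : (v * y⁻¹) * (y * u⁻¹) = (v * x⁻¹) * (x * u⁻¹) := by group
  have hsne : y * u⁻¹ ≠ x * u⁻¹ := fun h => hxy (mul_right_cancel h)
  constructor
  · intro hcomm
    obtain ⟨a, b, hab, hpab⟩ := h1.1
    obtain ⟨c, d, hcd, hqcd⟩ := h2.1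
    have hlt : len u < len v := h1.2.trans h2.2
    have hvu : v * u⁻¹ ≠ 1 := by
      intro h
      rw [mul_inv_eq_one.mp h] at hlt
      exact lt_irrefl _ hlt
    have hvux : (v * x⁻¹) * (x * u⁻¹) = v * u⁻¹ := by group
    have hpq : Equiv.swap a b ≠ Equiv.swap c d := by
      intro h
      apply hvu
      rw [← hvux, hpab, hqcd, ← h, Equiv.swap_mul_self]
    have hcomm' : Equiv.swap a b * Equiv.swap c d = Equiv.swap c d * Equiv.swap a b := by
      rw [← hpab, ← hqcd]; exact hcomm
    obtain ⟨hca, hcb, hda2, hdb⟩ := disj_of_comm hab hcd hcomm' hpq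
    have hts : (v * y⁻¹) * (y * u⁻¹) = Equiv.swap c d * Equiv.swap a b := by
      rw [hfact, hpab, hqcd]
    have hsp : y * u⁻¹ ≠ Equiv.swap a b := by rw [← hpab]; exact hsne
    obtain ⟨hs1, ht1⟩ := classify1 hab hcd hca hcb hda2 hdb h3.1 h4.1 hsp hts
    exact ⟨by rw [hs1, hqcd], by rw [ht1, hpab]⟩
  · intro a b c hab hac hbc hpab hqac
    have hts : (v * y⁻¹) * (y * u⁻¹) = Equiv.swap a c * Equiv.swap a b := by
      rw [hfact, hpab, hqac]
    have hsp : y * u⁻¹ ≠ Equiv.swap a b := by rw [← hpab]; exact hsne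
    have hclass := classify2 hab hac hbc h3.1 h4.1 hsp hts
    have hx : Equiv.swap a b * u = x := by rw [← hpab, inv_mul_cancel_right]
    have hv : Equiv.swap a c * x = v := by rw [← hqac, inv_mul_cancel_right]
    have hxa : x⁻¹ a = u⁻¹ b := by rw [← hx, inv_apply_swap_mul, Equiv.swap_apply_left]
    have hxc : x⁻¹ c = u⁻¹ c := by
      rw [← hx, inv_apply_swap_mul, Equiv.swap_apply_of_ne_of_ne hac.symm hbc.symm]
    refine ⟨?_, ?_, ?_⟩
    · rintro (⟨hoab, hobc⟩ | ⟨hocb, hoba⟩)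
      · have hAB : u⁻¹ a < u⁻¹ b := edge_pos hoab hx h1.2
        rcases hclass with ⟨hseq, hteq⟩ | ⟨hseq, hteq⟩
        · exfalso
          have hy : Equiv.swap a c * u = y := by rw [← hseq, inv_mul_cancel_right]
          have hv2 : Equiv.swap b c * y = v := by rw [← hteq, inv_mul_cancel_right]
          have hp4 := edge_pos hobc hv2 h4.2
          rw [← hy, inv_apply_swap_mul, inv_apply_swap_mul,
            Equiv.swap_apply_of_ne_of_ne hab.symm hbc, Equiv.swap_apply_right] at hp4
          omega
        · exact ⟨hseq, hteq⟩
      · have hBA : u⁻¹ b < u⁻¹ a := by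
          rw [Equiv.swap_comm] at hx
          exact edge_pos hoba hx h1.2
        rcases hclass with ⟨hseq, hteq⟩ | ⟨hseq, hteq⟩
        · exfalso
          have hy : Equiv.swap a c * u = y := by rw [← hseq, inv_mul_cancel_right]
          have hv2 : Equiv.swap b c * y = v := by rw [← hteq, inv_mul_cancel_right]
          rw [Equiv.swap_comm] at hv2
          have hp4 := edge_pos hocb hv2 h4.2
          rw [← hy, inv_apply_swap_mul, inv_apply_swap_mul, Equiv.swap_apply_right,
            Equiv.swap_apply_of_ne_of_ne hab.symm hbc] at hp4
          omega
        · exact ⟨hseq, hteq⟩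
    · rintro (⟨hoac, hocb⟩ | ⟨hobc, hoca⟩)
      · have hBC : u⁻¹ b < u⁻¹ c := by
          have h' := edge_pos hoac hv h2.2
          rwa [hxa, hxc] at h'
        rcases hclass with ⟨hseq, hteq⟩ | ⟨hseq, hteq⟩
        · exact ⟨hseq, hteq⟩
        · exfalso
          have hy : Equiv.swap b c * u = y := by rw [← hseq, inv_mul_cancel_right]
          rw [Equiv.swap_comm] at hy
          have hp3 := edge_pos hocb hy h3.2
          omega
      · have hCB : u⁻¹ c < u⁻¹ b := by
          rw [Equiv.swap_comm] at hv
          have h' := edge_pos hoca hv h2.2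
          rwa [hxa, hxc] at h'
        rcases hclass with ⟨hseq, hteq⟩ | ⟨hseq, hteq⟩
        · exact ⟨hseq, hteq⟩
        · exfalso
          have hy : Equiv.swap b c * u = y := by rw [← hseq, inv_mul_cancel_right]
          have hp3 := edge_pos hobc hy h3.2
          omega
    · rintro (⟨hoba, hoac⟩ | ⟨hoca, hoab⟩)
      · have hBA : u⁻¹ b < u⁻¹ a := by
          rw [Equiv.swap_comm] at hx
          exact edge_pos hoba hx h1.2
        constructor
        · intro hCpos
          have hAC : u⁻¹ a < u⁻¹ c := by rcases hCpos with h | h <;> omega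
          rcases hclass with ⟨hseq, hteq⟩ | ⟨hseq, hteq⟩
          · exact ⟨hseq, hteq⟩
          · exfalso
            have hy : Equiv.swap b c * u = y := by rw [← hseq, inv_mul_cancel_right]
            have hv2 : Equiv.swap a b * y = v := by rw [← hteq, inv_mul_cancel_right]
            rw [Equiv.swap_comm] at hv2
            have hp4 := edge_pos hoba hv2 h4.2
            rw [← hy, inv_apply_swap_mul, inv_apply_swap_mul, Equiv.swap_apply_left,
              Equiv.swap_apply_of_ne_of_ne hab hac] at hp4
            omega
        · intro hCneg
          have hCA : u⁻¹ c < u⁻¹ a := by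
            rcases lt_trichotomy (u⁻¹ a) (u⁻¹ c) with h | h | h
            · exact absurd (Or.inl ⟨hBA, h⟩) hCneg
            · exact absurd (u⁻¹.injective h) hac
            · exact h
          rcases hclass with ⟨hseq, hteq⟩ | ⟨hseq, hteq⟩
          · exfalso
            have hy : Equiv.swap a c * u = y := by rw [← hseq, inv_mul_cancel_right]
            have hp3 := edge_pos hoac hy h3.2
            omega
          · exact ⟨hseq, hteq⟩
      · have hAB : u⁻¹ a < u⁻¹ b := edge_pos hoab hx h1.2
        constructor
        · intro hCpos
          have hCA : u⁻¹ c < u⁻¹ a := by rcases hCpos with h | h <;> omega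
          rcases hclass with ⟨hseq, hteq⟩ | ⟨hseq, hteq⟩
          · exact ⟨hseq, hteq⟩
          · exfalso
            have hy : Equiv.swap b c * u = y := by rw [← hseq, inv_mul_cancel_right]
            have hv2 : Equiv.swap a b * y = v := by rw [← hteq, inv_mul_cancel_right]
            have hp4 := edge_pos hoab hv2 h4.2
            rw [← hy, inv_apply_swap_mul, inv_apply_swap_mul,
              Equiv.swap_apply_of_ne_of_ne hab hac, Equiv.swap_apply_left] at hp4
            omega
        · intro hCneg
          have hAC : u⁻¹ a < u⁻¹ c := by
            rcases lt_trichotomy (u⁻¹ a) (u⁻¹ c) with h | h | h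
            · exact h
            · exact absurd (u⁻¹.injective h) hac
            · exact absurd (Or.inr ⟨h, hAB⟩) hCneg
          rcases hclass with ⟨hseq, hteq⟩ | ⟨hseq, hteq⟩
          · exfalso
            have hy : Equiv.swap a c * u = y := by rw [← hseq, inv_mul_cancel_right]
            rw [Equiv.swap_comm] at hy
            have hp3 := edge_pos hoca hy h3.2
            omega
          · exact ⟨hseq, hteq⟩
end

section
/- Let h ∈ ℕ, let u,v ∈ 𝔖_n with u < v, and let F be an h-flipclass of paths from u to v. Then the following are equivalent: (1) the natural injection i_{TS_F} from F to the set of paths of length h from (u,0) to (v,h) in TS_F is bijective, i.e. every such path in TS_F is effective; (2) for all vertices (a,i) and (b,i+2) of TS_F with (a,i) ≤ (b,i+2) in the poset induced by TS_F, the interval [(a,i),(b,i+2)] in that poset is a diamond (it contains exactly two elements strictly between (a,i) and (b,i+2)), and the flip operators thereby defined on the set of paths of length h from (u,0) to (v,h) in TS_F (replacing the middle vertex of a length-2 subpath by the other middle element of the corresponding diamond) act transitively on that set of paths. -/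
/-!
Every path of `F` is a path of `TS_F`, and a flip of paths of `TS_F` is a flip of Bruhat paths,
which keeps a flipclass. So if `TS_F` is effective its paths are those of `F` and flips connect
them; conversely a path of `TS_F` joined by flips to one of `F` lies in `F`.

For the diamonds: in the graded poset of `TS_F` the interval `[(a,i),(b,i+2)]` consists of the
vertices `(c,i+1)` with `a → c → b` in `TS_F`. If `TS_F` is effective, splicing two paths of `F`
through such a `c` and flipping at time `i+1` shows that every Bruhat middle of `a` and `b` occurs,
and a length-2 Bruhat path `u → x → w` has exactly two middles. Indeed `σ = w u⁻¹` is a product of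
two distinct transpositions and every middle is `(e σe) u`: either `σ` is a 3-cycle, leaving three
candidates of which an even number are valid, or `σ` is a product of two disjoint transpositions,
each giving a middle.
-/

open MvPolynomial

open Equiv

section Bruhat

variable {n : ℕ}

def inversions (w : Pm n) : Finset (Fin n × Fin n) :=
  Finset.univ.filter fun q : Fin n × Fin n => q.1 < q.2 ∧ w q.2 < w q.1

lemma mem_inversions {w : Pm n} {q : Fin n × Fin n} :
    q ∈ inversions w ↔ q.1 < q.2 ∧ w q.2 < w q.1 := by
  simp [inversions]

/-- `q ↦ (σ q.1, σ q.2)`, or `q` itself when `σ = swap P Q` would reverse the pair, injects the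
inversions of `w` into those of `w * σ`, and misses `(P, Q)`. -/
lemma len_lt_len_mul_swap (w : Pm n) {P Q : Fin n} (hPQ : P < Q) (hw : w P < w Q) :
    len w < len (w * swap P Q) := by
  set σ := swap P Q
  have hσσ : ∀ z, σ (σ z) = z := swap_apply_self P Q
  have hσP : σ P = Q := swap_apply_left P Q
  have hσQ : σ Q = P := swap_apply_right P Q
  have hσz : ∀ z, z ≠ P → z ≠ Q → σ z = z := fun z => swap_apply_of_ne_of_ne
  let φ : Fin n × Fin n → Fin n × Fin n :=
    fun q => if σ q.1 < σ q.2 then (σ q.1, σ q.2) else q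
  have hPQ_mem : (P, Q) ∈ inversions (w * σ) := by
    rw [mem_inversions]; simp [σ, hPQ, hw]
  have hmaps : ∀ q ∈ inversions w, φ q ∈ (inversions (w * σ)).erase (P, Q) := by
    rintro ⟨i, j⟩ hq
    rw [mem_inversions] at hq
    simp only [φ, Finset.mem_erase, mem_inversions, Perm.mul_apply]
    split_ifs <;> grind
  have hinj : Set.InjOn φ (inversions w) := by
    rintro ⟨i, j⟩ hq ⟨k, l⟩ hq' he
    simp only [Finset.mem_coe, mem_inversions] at hq hq'
    simp only [φ] at he
    split_ifs at he <;> grind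
  calc len w = (inversions w).card := rfl
    _ ≤ ((inversions (w * σ)).erase (P, Q)).card := Finset.card_le_card_of_injOn φ hmaps hinj
    _ < (inversions (w * σ)).card := Finset.card_erase_lt_of_mem hPQ_mem

lemma len_lt_len_mul_swap_iff (w : Pm n) {P Q : Fin n} (hPQ : P ≠ Q) :
    len w < len (w * swap P Q) ↔ (P < Q ↔ w P < w Q) := by
  wlog hlt : P < Q generalizing P Q
  · have hw := w.injective.ne hPQ
    rw [swap_comm, this hPQ.symm (hPQ.lt_or_gt.resolve_left hlt)]
    rw [← Fin.val_ne_iff] at hPQ hw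
    simp only [Fin.lt_def] at hlt ⊢
    omega
  rcases lt_or_gt_of_ne (w.injective.ne hPQ) with hw | hw
  · simp [hlt, hw, len_lt_len_mul_swap w hlt hw]
  · have hlen := len_lt_len_mul_swap (w * swap P Q) hlt (by simpa using hw)
    rw [mul_assoc, swap_mul_self, mul_one] at hlen
    exact iff_of_false (by omega) (by simp [hlt, not_lt_of_gt hw])

lemma bedge_swap_mul_iff (z : Pm n) {e f : Fin n} (hef : e ≠ f) :
    BEdge z (swap e f * z) ↔ (z⁻¹ e < z⁻¹ f ↔ e < f) := by
  have hconj : swap e f * z = z * swap (z⁻¹ e) (z⁻¹ f) := by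
    rw [swap_apply_apply]; simp [mul_assoc]
  rw [BEdge, mul_inv_cancel_right, hconj, len_lt_len_mul_swap_iff z (z⁻¹.injective.ne hef)]
  simp only [Perm.coe_inv, apply_symm_apply]
  exact and_iff_right ⟨e, f, hef, rfl⟩

lemma BEdge.exists_swap {a b : Pm n} (h : BEdge a b) :
    ∃ e f, e ≠ f ∧ b = swap e f * a := by
  obtain ⟨⟨e, f, hef, hab⟩, -⟩ := h
  exact ⟨e, f, hef, by rw [← hab, inv_mul_cancel_right]⟩

def middles (u w : Pm n) : Set (Pm n) := {z | BEdge u z ∧ BEdge z w}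

lemma mem_middles {u w z : Pm n} : z ∈ middles u w ↔ BEdge u z ∧ BEdge z w := Iff.rfl

lemma eq_or_eq_or_eq_one_of_isSwap_mul_swap {σ : Pm n} {e f : Fin n} (hef : e ≠ f)
    (hs : (σ * swap e f).IsSwap) : σ e = f ∨ σ f = e ∨ σ = 1 := by
  by_contra! hσ
  obtain ⟨g, k, -, hgk⟩ := hs
  have hmoved : ∀ z, (σ * swap e f) z ≠ z → z = g ∨ z = k := by
    intro z hz; by_contra! h; exact hz (by rw [hgk, swap_apply_of_ne_of_ne h.1 h.2])
  have he := hmoved e (by simpa using hσ.2.1)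
  have hf := hmoved f (by simpa using hσ.1)
  have : σ * swap e f = swap e f := by
    rcases he with rfl | rfl <;> rcases hf with rfl | rfl
    all_goals first | exact absurd rfl hef | rw [hgk, swap_comm]
  exact hσ.2.2 (by simpa using congrArg (· * swap e f) this)

lemma exists_eq_swap_mul_of_mem_middles {u z w : Pm n} (hz : z ∈ middles u w) :
    ∃ e, (w * u⁻¹) e ≠ e ∧ z = swap e ((w * u⁻¹) e) * u := by
  obtain ⟨h1, h2⟩ := hz
  obtain ⟨e, f, hef, rfl⟩ := h1.exists_swap
  have hs : (w * u⁻¹ * swap e f).IsSwap := by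
    simpa [mul_inv_rev, mul_assoc] using h2.1
  have hwu : w * u⁻¹ ≠ 1 := by
    rw [Ne, mul_inv_eq_one]
    rintro rfl
    exact absurd (h1.2.trans h2.2) (lt_irrefl _)
  rcases eq_or_eq_or_eq_one_of_isSwap_mul_swap hef hs with h | h | h
  · exact ⟨e, by rw [h]; exact hef.symm, by rw [h]⟩
  · exact ⟨f, by rw [h]; exact hef, by rw [h, swap_comm]⟩
  · exact absurd h hwu

section ThreeCycle

variable {σ u : Pm n} {p q r : Fin n}

lemma mul_swap_eq_swap_of_threeCycle (hqr : q ≠ r) (hp : σ p = q) (hq : σ q = r)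
    (hr : σ r = p) (hfix : ∀ z, z ≠ p → z ≠ q → z ≠ r → σ z = z) :
    σ * swap p q = swap p r := by
  ext z
  grind [Perm.mul_apply]

lemma swap_mul_mem_middles_iff_of_threeCycle (hpq : p ≠ q) (hqr : q ≠ r) (hrp : r ≠ p)
    (hp : σ p = q) (hq : σ q = r) (hr : σ r = p)
    (hfix : ∀ z, z ≠ p → z ≠ q → z ≠ r → σ z = z) :
    swap p q * u ∈ middles u (σ * u) ↔
      (u⁻¹ p < u⁻¹ q ↔ p < q) ∧ (u⁻¹ q < u⁻¹ r ↔ p < r) := by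
  have hσ : σ * u = swap p r * (swap p q * u) := by
    rw [← mul_assoc, ← mul_swap_eq_swap_of_threeCycle hqr hp hq hr hfix, mul_assoc σ,
      swap_mul_self, mul_one]
  rw [hσ, mem_middles, bedge_swap_mul_iff u hpq, bedge_swap_mul_iff _ hrp.symm]
  simp [swap_apply_of_ne_of_ne hrp hqr.symm]

lemma eq_swap_mul_of_threeCycle {z : Pm n} (hp : σ p = q) (hq : σ q = r) (hr : σ r = p)
    (hfix : ∀ z, z ≠ p → z ≠ q → z ≠ r → σ z = z) (hz : z ∈ middles u (σ * u)) :
    z = swap p q * u ∨ z = swap q r * u ∨ z = swap r p * u := by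
  obtain ⟨e, he, rfl⟩ := exists_eq_swap_mul_of_mem_middles hz
  simp only [mul_inv_cancel_right] at he ⊢
  by_cases hep : e = p
  · subst hep; simp [hp]
  by_cases heq : e = q
  · subst heq; simp [hq]
  by_cases her : e = r
  · subst her; simp [hr]
  exact absurd (hfix e hep heq her) he

lemma swap_mul_ne_swap_mul (u : Pm n) (hpq : p ≠ q) (hrp : r ≠ p) :
    swap p q * u ≠ swap q r * u := by
  intro h
  have := congrArg (· p) (mul_right_cancel h)
  simp [swap_apply_of_ne_of_ne hpq hrp.symm] at this
  exact hpq this.symm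

lemma exists_flip_swap_mul_of_threeCycle (hpq : p ≠ q) (hqr : q ≠ r) (hrp : r ≠ p)
    (hp : σ p = q) (hq : σ q = r) (hr : σ r = p) (hfix : ∀ z, z ≠ p → z ≠ q → z ≠ r → σ z = z)
    (hx : swap p q * u ∈ middles u (σ * u)) :
    ∃ y, y ≠ swap p q * u ∧ middles u (σ * u) = {swap p q * u, y} := by
  have h₁ := swap_mul_mem_middles_iff_of_threeCycle (u := u) hpq hqr hrp hp hq hr hfix
  have h₂ := swap_mul_mem_middles_iff_of_threeCycle (u := u) hqr hrp hpq hq hr hp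
    (fun z h1 h2 h3 => hfix z h3 h1 h2)
  have h₃ := swap_mul_mem_middles_iff_of_threeCycle (u := u) hrp hpq hqr hr hp hq
    (fun z h1 h2 h3 => hfix z h2 h3 h1)
  -- An even number of the three candidates are middles: a finite check on the relative orders
  -- of `p, q, r` and of their positions `u⁻¹ p, u⁻¹ q, u⁻¹ r`.
  have hcount : swap q r * u ∈ middles u (σ * u) ↔ swap r p * u ∉ middles u (σ * u) := by
    have := h₁.mp hx
    have := u⁻¹.injective.ne hpq
    have := u⁻¹.injective.ne hqr
    have := u⁻¹.injective.ne hrp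
    rw [h₂, h₃]
    rw [← Fin.val_ne_iff] at *
    simp only [Fin.lt_def] at *
    omega
  have hcand z (hz : z ∈ middles u (σ * u)) := eq_swap_mul_of_threeCycle hp hq hr hfix hz
  by_cases h₂' : swap q r * u ∈ middles u (σ * u)
  · refine ⟨_, (swap_mul_ne_swap_mul u hpq hrp).symm, Set.ext fun z => ⟨fun hz => ?_, ?_⟩⟩
    · rcases hcand z hz with rfl | rfl | rfl
      · exact Or.inl rfl
      · exact Or.inr rfl
      · exact absurd hz (hcount.mp h₂')
    · rintro (rfl | rfl) <;> assumption
  · refine ⟨_, swap_mul_ne_swap_mul u hrp hqr, Set.ext fun z => ⟨fun hz => ?_, ?_⟩⟩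
    · rcases hcand z hz with rfl | rfl | rfl
      · exact Or.inl rfl
      · exact absurd hz h₂'
      · exact Or.inr rfl
    · rintro (rfl | rfl)
      · exact hx
      · exact not_not.mp (mt hcount.mpr h₂')

lemma exists_flip_of_threeCycle {x : Pm n} (hpq : p ≠ q) (hqr : q ≠ r) (hrp : r ≠ p)
    (hp : σ p = q) (hq : σ q = r) (hr : σ r = p) (hfix : ∀ z, z ≠ p → z ≠ q → z ≠ r → σ z = z)
    (hx : BEdge u x) (hxw : BEdge x (σ * u)) :
    ∃ y, y ≠ x ∧ middles u (σ * u) = {x, y} := by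
  rcases eq_swap_mul_of_threeCycle hp hq hr hfix ⟨hx, hxw⟩ with rfl | rfl | rfl
  · exact exists_flip_swap_mul_of_threeCycle hpq hqr hrp hp hq hr hfix ⟨hx, hxw⟩
  · exact exists_flip_swap_mul_of_threeCycle hqr hrp hpq hq hr hp
      (fun z h1 h2 h3 => hfix z h3 h1 h2) ⟨hx, hxw⟩
  · exact exists_flip_swap_mul_of_threeCycle hrp hpq hqr hr hp hq
      (fun z h1 h2 h3 => hfix z h2 h3 h1) ⟨hx, hxw⟩

end ThreeCycle

section Flip

variable {u : Pm n}

lemma exists_flip_of_shared {a b d : Fin n} (hab : a ≠ b) (hbd : b ≠ d) (hda : d ≠ a)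
    (hx : BEdge u (swap a b * u)) (hxw : BEdge (swap a b * u) (swap b d * (swap a b * u))) :
    ∃ y, y ≠ swap a b * u ∧
      middles u (swap b d * (swap a b * u)) = {swap a b * u, y} := by
  rw [← mul_assoc] at hxw ⊢
  refine exists_flip_of_threeCycle hda.symm hbd.symm hab.symm ?_ ?_ ?_ ?_ hx hxw <;>
    grind [Perm.mul_apply]

lemma exists_flip_of_disjoint {a b c d : Fin n} (hab : a ≠ b) (hcd : c ≠ d)
    (hac : a ≠ c) (had : a ≠ d) (hbc : b ≠ c) (hbd : b ≠ d) (hx : BEdge u (swap a b * u))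
    (hxw : BEdge (swap a b * u) (swap c d * (swap a b * u))) :
    ∃ y, y ≠ swap a b * u ∧
      middles u (swap c d * (swap a b * u)) = {swap a b * u, y} := by
  have hinv {e f : Fin n} (g : Fin n) (heg : e ≠ g) (hfg : f ≠ g) :
      (swap e f * u)⁻¹ g = u⁻¹ g := by
    simp [swap_apply_of_ne_of_ne heg.symm hfg.symm]
  have hy₁ : BEdge u (swap c d * u) := by
    rw [bedge_swap_mul_iff u hcd, ← hinv c hac hbc, ← hinv d had hbd]
    exact (bedge_swap_mul_iff _ hcd).mp hxw
  have hy₂ : BEdge (swap c d * u) (swap a b * (swap c d * u)) := by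
    rw [bedge_swap_mul_iff _ hab, hinv a hac.symm had.symm, hinv b hbc.symm hbd.symm]
    exact (bedge_swap_mul_iff u hab).mp hx
  have hcomm : swap c d * (swap a b * u) = swap a b * (swap c d * u) := by
    rw [← mul_assoc, ← mul_assoc, (Perm.disjoint_swap_swap
      (by simp [hab, hcd, hac.symm, had.symm, hbc.symm, hbd.symm])).commute.eq]
  refine ⟨swap c d * u, fun h => ?_, Set.ext fun z => ⟨fun hz => ?_, ?_⟩⟩
  · have := congrArg (· a) (mul_right_cancel h)
    simp [swap_apply_of_ne_of_ne hac had] at this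
    exact hab this
  · obtain ⟨e, he, rfl⟩ := exists_eq_swap_mul_of_mem_middles hz
    simp only [Perm.mul_apply] at he ⊢
    simp only [Set.mem_insert_iff, Set.mem_singleton_iff]
    by_cases hea : e = a
    · subst hea; simp [swap_apply_of_ne_of_ne hbc hbd]
    by_cases heb : e = b
    · subst heb; simp [swap_apply_of_ne_of_ne hac had, swap_comm]
    by_cases hec : e = c
    · subst hec; simp [swap_apply_of_ne_of_ne hac.symm hbc.symm]
    by_cases hed : e = d
    · subst hed; simp [swap_apply_of_ne_of_ne had.symm hbd.symm, swap_comm]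
    simp [swap_apply_of_ne_of_ne hea heb, swap_apply_of_ne_of_ne hec hed] at he
  · rintro (rfl | rfl)
    · exact ⟨hx, hxw⟩
    · exact ⟨hy₁, hcomm ▸ hy₂⟩

theorem exists_flip {x w : Pm n} (h1 : BEdge u x) (h2 : BEdge x w) :
    ∃ y, y ≠ x ∧ middles u w = {x, y} := by
  obtain ⟨a, b, hab, rfl⟩ := h1.exists_swap
  obtain ⟨c, d, hcd, rfl⟩ := h2.exists_swap
  have hne : swap c d ≠ swap a b := fun h => by
    rw [h, ← mul_assoc, swap_mul_self, one_mul] at h2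
    exact lt_irrefl _ (h1.2.trans h2.2)
  by_cases hbc : b = c
  · subst hbc
    exact exists_flip_of_shared hab hcd (fun h => hne (by rw [h, swap_comm])) h1 h2
  by_cases hbd : b = d
  · subst hbd
    rw [swap_comm c] at h2 ⊢
    exact exists_flip_of_shared hab (Ne.symm hcd) (fun h => hne (by rw [h])) h1 h2
  rw [swap_comm a b] at h1 h2 hne ⊢
  by_cases hac : a = c
  · subst hac
    exact exists_flip_of_shared (Ne.symm hab) hcd (fun h => hne (by rw [h, swap_comm])) h1 h2
  by_cases had : a = d
  · subst had
    rw [swap_comm c] at h2 ⊢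
    exact exists_flip_of_shared (Ne.symm hab) (Ne.symm hcd) (fun h => hne (by rw [h])) h1 h2
  exact exists_flip_of_disjoint (Ne.symm hab) hcd hbc hbd hac had h1 h2

lemma ncard_middles_eq_two {x w : Pm n} (h1 : BEdge u x) (h2 : BEdge x w) :
    (middles u w).ncard = 2 := by
  obtain ⟨y, hyx, hS⟩ := exists_flip h1 h2
  rw [hS, Set.ncard_pair hyx.symm]

end Flip

end Bruhat

namespace Relation.ReflTransGen

variable {α : Type*} {R : α → α → Prop} {t : α → ℕ} {x y : α}

lemma grade_le (hR : ∀ a b, R a b → t b = t a + 1) (h : ReflTransGen R x y) : t x ≤ t y := by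
  induction h with
  | refl => exact le_rfl
  | tail _ hbc ih => have := hR _ _ hbc; omega

lemma eq_of_grade_eq (hR : ∀ a b, R a b → t b = t a + 1) (h : ReflTransGen R x y)
    (hxy : t y = t x) : x = y := by
  rcases h.cases_head with rfl | ⟨c, hxc, hcy⟩
  · rfl
  · have := hR _ _ hxc; have := hcy.grade_le hR; omega

lemma of_grade_eq_succ (hR : ∀ a b, R a b → t b = t a + 1) (h : ReflTransGen R x y)
    (hxy : t y = t x + 1) : R x y := by
  rcases h.cases_head with rfl | ⟨c, hxc, hcy⟩
  · omega
  · obtain rfl := hcy.eq_of_grade_eq hR (by have := hR _ _ hxc; omega)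
    exact hxc

lemma exists_of_grade_eq_add_two (hR : ∀ a b, R a b → t b = t a + 1) (h : ReflTransGen R x y)
    (hxy : t y = t x + 2) : ∃ c, R x c ∧ R c y := by
  rcases h.cases_head with rfl | ⟨c, hxc, hcy⟩
  · omega
  · exact ⟨c, hxc, hcy.of_grade_eq_succ hR (by have := hR _ _ hxc; omega)⟩

end Relation.ReflTransGen

lemma Relation.interval_eq_of_grade_eq_add_two {α : Type*} {R : α → α → Prop} {t : α → ℕ}
    {x y : α} (hR : ∀ a b, R a b → t b = t a + 1) (hxy : t y = t x + 2) :
    {z | ReflTransGen R x z ∧ ReflTransGen R z y ∧ z ≠ x ∧ z ≠ y} = {z | R x z ∧ R z y} := by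
  ext z
  refine ⟨fun ⟨hxz, hzy, hzx, hzy'⟩ => ?_, fun ⟨hxz, hzy⟩ => ?_⟩
  · have h₁ := hxz.grade_le hR
    have h₂ := hzy.grade_le hR
    have := mt (hxz.eq_of_grade_eq hR) (Ne.symm hzx)
    have := mt (hzy.eq_of_grade_eq hR) hzy'
    exact ⟨hxz.of_grade_eq_succ hR (by omega), hzy.of_grade_eq_succ hR (by omega)⟩
  · have h₁ := hR _ _ hxz
    have h₂ := hR _ _ hzy
    refine ⟨.single hxz, .single hzy, fun h => ?_, fun h => ?_⟩ <;> subst h <;> omega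

def TSFlipStep (n h : ℕ) (F : Set (ℕ → Pm n)) (u v : Pm n) (z z' : ℕ → Pm n) : Prop :=
  IsTSPath n h F u v z ∧ IsTSPath n h F u v z' ∧ ∃ i, FlipAt h i z z'

section Paths

variable {n h : ℕ}

lemma TSE.snd_eq {F : Set (ℕ → Pm n)} (x y : Pm n × ℕ) (hxy : TSE n h F x y) :
    y.2 = x.2 + 1 :=
  hxy.2.1

lemma FlipAt.symm {i : ℕ} {p q : ℕ → Pm n} (hf : FlipAt h i p q) : FlipAt h i q p :=
  ⟨hf.1, hf.2.1, hf.2.2.1.symm, fun j hj => (hf.2.2.2 j hj).symm⟩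

lemma FlipAt.update {i : ℕ} {p : ℕ → Pm n} {z : Pm n} (hi : 0 < i) (hih : i < h)
    (hz : z ≠ p i) : FlipAt h i p (Function.update p i z) :=
  ⟨hi, hih, by simpa using hz.symm, fun j hj => by simp [hj]⟩

lemma IsPath.update_succ {i : ℕ} {u v z : Pm n} {p : ℕ → Pm n} (hp : IsPath n h u v p)
    (hi : i + 1 < h) (h₁ : BEdge (p i) z) (h₂ : BEdge z (p (i + 2))) :
    IsPath n h u v (Function.update p (i + 1) z) := by
  refine ⟨by simpa using hp.1, fun j hj => ?_, fun j hj => ?_⟩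
  · rw [Function.update_of_ne (by omega)]; exact hp.2.1 j hj
  · rcases lt_trichotomy j i with hji | rfl | hji
    · rw [Function.update_of_ne (by omega), Function.update_of_ne (by omega)]
      exact hp.2.2 j hj
    · simpa using h₁
    · obtain rfl | hji := eq_or_lt_of_le (Nat.succ_le_of_lt hji)
      · simpa using h₂
      · rw [Function.update_of_ne (by omega), Function.update_of_ne (by omega)]
        exact hp.2.2 j hj

lemma IsTSPath.splice {k : ℕ} {F : Set (ℕ → Pm n)} {u v : Pm n} {y y' : ℕ → Pm n}
    (hy : IsTSPath n h F u v y) (hy' : IsTSPath n h F u v y') (hk : y k = y' k) :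
    IsTSPath n h F u v (fun j => if j ≤ k then y j else y' j) := by
  refine ⟨by simpa using hy.1, fun j hj => ?_, fun j hj => ?_⟩
  · dsimp only
    split_ifs
    exacts [hy.2.1 j hj, hy'.2.1 j hj]
  · rcases lt_trichotomy j k with hjk | rfl | hjk
    · simpa [hjk.le, Nat.succ_le_of_lt hjk] using hy.2.2 j hj
    · simpa [hk] using hy'.2.2 j hj
    · simpa [not_le.mpr hjk, not_lt.mpr hjk.le] using hy'.2.2 j hj

end Paths

namespace IsFlipclass

variable {n h : ℕ} {u v : Pm n} {F : Set (ℕ → Pm n)}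

lemma nonempty (hF : IsFlipclass n h u v F) : F.Nonempty := by
  obtain ⟨p₀, -, rfl⟩ := hF
  exact ⟨p₀, .refl⟩

lemma isPath (hF : IsFlipclass n h u v F) {p : ℕ → Pm n} (hp : p ∈ F) : IsPath n h u v p := by
  obtain ⟨p₀, hp₀, rfl⟩ := hF
  rcases Relation.ReflTransGen.cases_tail hp with rfl | ⟨c, -, hstep⟩
  exacts [hp₀, hstep.2.1]

lemma mem_of_flipStep (hF : IsFlipclass n h u v F) {p q : ℕ → Pm n} (hp : p ∈ F)
    (hs : FlipStep n h u v p q) : q ∈ F := by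
  obtain ⟨p₀, -, rfl⟩ := hF
  exact Relation.ReflTransGen.tail hp hs

lemma isTSPath (hF : IsFlipclass n h u v F) {p : ℕ → Pm n} (hp : p ∈ F) :
    IsTSPath n h F u v p :=
  ⟨(hF.isPath hp).1, (hF.isPath hp).2.1, fun _ hi => ⟨hi, rfl, p, hp, rfl, rfl⟩⟩

lemma bedge_of_tse (hF : IsFlipclass n h u v F) {x y : Pm n × ℕ} (hxy : TSE n h F x y) :
    BEdge x.1 y.1 := by
  obtain ⟨hlt, -, p, hp, h₁, h₂⟩ := hxy
  rw [← h₁, ← h₂]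
  exact (hF.isPath hp).2.2 x.2 hlt

lemma isPath_of_isTSPath (hF : IsFlipclass n h u v F) {y : ℕ → Pm n}
    (hy : IsTSPath n h F u v y) : IsPath n h u v y :=
  ⟨hy.1, hy.2.1, fun i hi => hF.bedge_of_tse (hy.2.2 i hi)⟩

lemma update_mem (hF : IsFlipclass n h u v F) {p : ℕ → Pm n} {i : ℕ} {z : Pm n} (hp : p ∈ F)
    (hi : i + 1 < h) (h₁ : BEdge (p i) z) (h₂ : BEdge z (p (i + 2))) :
    Function.update p (i + 1) z ∈ F := by
  by_cases hz : z = p (i + 1)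
  · simpa [hz] using hp
  · exact hF.mem_of_flipStep hp ⟨hF.isPath hp, (hF.isPath hp).update_succ hi h₁ h₂, i + 1,
      FlipAt.update (Nat.succ_pos i) hi hz⟩

lemma tsFlipStep_connected (hF : IsFlipclass n h u v F) {p q : ℕ → Pm n} (hp : p ∈ F)
    (hq : q ∈ F) : Relation.ReflTransGen (TSFlipStep n h F u v) p q := by
  obtain ⟨p₀, hp₀, hFeq⟩ := id hF
  have hfrom : ∀ q ∈ F, Relation.ReflTransGen (TSFlipStep n h F u v) p₀ q := by
    intro q hq
    rw [hFeq] at hq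
    induction hq with
    | refl => exact .refl
    | @tail b c hb hbc ih =>
      have hbF : b ∈ F := hFeq ▸ hb
      exact ih.tail ⟨hF.isTSPath hbF, hF.isTSPath (hF.mem_of_flipStep hbF hbc), hbc.2.2⟩
  have : Std.Symm (TSFlipStep n h F u v) := ⟨fun _ _ ⟨hz, hz', i, hf⟩ => ⟨hz', hz, i, hf.symm⟩⟩
  exact (Std.Symm.symm _ _ (hfrom p hp)).trans (hfrom q hq)

lemma mem_of_tsFlipStep_connected (hF : IsFlipclass n h u v F) {p y : ℕ → Pm n} (hp : p ∈ F)
    (hpy : Relation.ReflTransGen (TSFlipStep n h F u v) p y) : y ∈ F := by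
  induction hpy with
  | refl => exact hp
  | tail _ hbc ih =>
    exact hF.mem_of_flipStep ih ⟨hF.isPath ih, hF.isPath_of_isTSPath hbc.2.1, hbc.2.2⟩

/-- When `TS_F` is effective, every Bruhat middle of `a` and `b` occurs at time `i + 1`: splice
two paths of `F` through a vertex `(c, i + 1)` of the interval, then flip at time `i + 1`. -/
lemma interval_eq_image_middles (hF : IsFlipclass n h u v F)
    (heff : ∀ y, IsTSPath n h F u v y → y ∈ F) {a b : Pm n} {i : ℕ}
    (hab : Relation.ReflTransGen (TSE n h F) (a, i) (b, i + 2)) :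
    {z : Pm n × ℕ | Relation.ReflTransGen (TSE n h F) (a, i) z ∧
      Relation.ReflTransGen (TSE n h F) z (b, i + 2) ∧ z ≠ (a, i) ∧ z ≠ (b, i + 2)} =
      (fun c => (c, i + 1)) '' middles a b := by
  rw [Relation.interval_eq_of_grade_eq_add_two TSE.snd_eq rfl]
  obtain ⟨⟨c, k⟩, ⟨-, rfl, p, hp, hpa, hpc⟩, ⟨hi, -, q, hq, hqc, hqb⟩⟩ :=
    hab.exists_of_grade_eq_add_two TSE.snd_eq rfl
  set r : ℕ → Pm n := fun j => if j ≤ i + 1 then p j else q j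
  have hr : r ∈ F := heff r ((hF.isTSPath hp).splice (hF.isTSPath hq) (hpc.trans hqc.symm))
  have hri : r i = a := by simp [r, hpa]
  have hrb : r (i + 2) = b := by simp [r, hqb]
  ext ⟨z, j⟩
  simp only [Set.mem_ofPred_eq, Set.mem_image, Prod.mk.injEq]
  constructor
  · rintro ⟨h₁, h₂⟩
    exact ⟨z, ⟨hF.bedge_of_tse h₁, hF.bedge_of_tse h₂⟩, rfl, h₁.2.1.symm⟩
  · rintro ⟨z, ⟨h₁, h₂⟩, rfl, rfl⟩
    have hr' := hF.update_mem hr hi (hri ▸ h₁) (hrb ▸ h₂)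
    exact ⟨⟨by omega, rfl, _, hr', by simp [hri], by simp⟩,
      ⟨hi, rfl, _, hr', by simp, by simp [hrb]⟩⟩

end IsFlipclass

theorem ts_effective_iff_general (n h : ℕ) (u v : Pm n)
    (F : Set (ℕ → Pm n)) (hF : IsFlipclass n h u v F) :
    (∀ y, IsTSPath n h F u v y → y ∈ F) ↔
    ((∀ (a b : Pm n) (i : ℕ), (a, i) ∈ TSV n h F → (b, i + 2) ∈ TSV n h F →
        Relation.ReflTransGen (TSE n h F) (a, i) (b, i + 2) →
        Set.ncard {z : Pm n × ℕ |
          Relation.ReflTransGen (TSE n h F) (a, i) z ∧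
          Relation.ReflTransGen (TSE n h F) z (b, i + 2) ∧
          z ≠ (a, i) ∧ z ≠ (b, i + 2)} = 2) ∧
      ∀ y y', IsTSPath n h F u v y → IsTSPath n h F u v y' →
        Relation.ReflTransGen
          (fun z z' => IsTSPath n h F u v z ∧ IsTSPath n h F u v z' ∧ ∃ i, FlipAt h i z z')
          y y') := by
  refine ⟨fun heff => ⟨fun a b i _ _ hab => ?_, fun y y' hy hy' => ?_⟩, fun ⟨_, hconn⟩ y hy => ?_⟩
  · obtain ⟨c, hac, hcb⟩ := hab.exists_of_grade_eq_add_two TSE.snd_eq rfl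
    rw [hF.interval_eq_image_middles heff hab,
      Set.ncard_image_of_injective _ (Prod.mk_left_injective _)]
    exact ncard_middles_eq_two (hF.bedge_of_tse hac) (hF.bedge_of_tse hcb)
  · exact hF.tsFlipStep_connected (heff y hy) (heff y' hy')
  · obtain ⟨p, hp⟩ := hF.nonempty
    exact hF.mem_of_tsFlipStep_connected hp (hconn p y (hF.isTSPath hp) hy)

/-- Lemma (effectiveness criterion): every path of length `h` from `(u,0)` to `(v,h)` in
`TS_F` is effective (i.e. the natural injection `i_{TS_F}` is bijective) iff every
nonempty interval `[(a,i),(b,i+2)]` in the poset induced by `TS_F` is a diamond (exactly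
two elements strictly between) and the flip operators thereby defined act transitively on
the set of such paths. -/
theorem ts_effective_iff (n h : ℕ) (u v : Pm n) (huv : bruhatLT u v)
    (F : Set (ℕ → Pm n)) (hF : IsFlipclass n h u v F) :
    (∀ y, IsTSPath n h F u v y → y ∈ F) ↔
    ((∀ (a b : Pm n) (i : ℕ), (a, i) ∈ TSV n h F → (b, i + 2) ∈ TSV n h F →
        Relation.ReflTransGen (TSE n h F) (a, i) (b, i + 2) →
        Set.ncard {z : Pm n × ℕ |
          Relation.ReflTransGen (TSE n h F) (a, i) z ∧
          Relation.ReflTransGen (TSE n h F) z (b, i + 2) ∧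
          z ≠ (a, i) ∧ z ≠ (b, i + 2)} = 2) ∧
      ∀ y y', IsTSPath n h F u v y → IsTSPath n h F u v y' →
        Relation.ReflTransGen
          (fun z z' => IsTSPath n h F u v z ∧ IsTSPath n h F u v z' ∧ ∃ i, FlipAt h i z z')
          y y') :=
  ts_effective_iff_general n h u v F hF
end

section
/- Let h ∈ ℕ, let F be an h-flipclass of 𝔖_n, and let e = |E(F)|. Then there exists an h-flipclass F′ of 𝔖_e that is isomorphic to F. In particular, if F is irreducible, then e ≤ h+1 and F is isomorphic to an h-flipclass of 𝔖_{h+1}. -/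
open MvPolynomial

/-!
Every label of a path of `F` moves only letters of `E`, so all vertices of `F` lie in the coset
`H u` of the group `H ≅ 𝔖_e` of permutations supported on `E`. For `a < b`, the Bruhat edge
`w → (a b) w` exists iff `w⁻¹ a < w⁻¹ b`; for `w = σ u` with `σ ∈ H` and `a, b ∈ E` this
depends only on `σ` and on the relative order of the positions `u⁻¹(E)`. So if `u' ∈ 𝔖_m` places
its first `e` letters in the same relative order, `σ u ↦ σ' u'` (`σ'` the copy of `σ` on those
letters) preserves and reflects edges and labels. It maps flips onto flips because a flip cannot
leave the coset: if `x → z → y` with `y x⁻¹ ∈ H`, the two labels are swaps with non-trivial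
product `y x⁻¹`, hence move only letters moved by `y x⁻¹`.

The letters moved along a path do not change under flips, so `E` is the vertex set of `G(Γ)` for
every `Γ ∈ F`, a graph with `h` edges; if it is connected, `e ≤ h + 1`.
-/

open Equiv Finset

theorem bijOn_image_of_comp_eq {α β γ : Type*} {f : β → γ} {φ : α → β} {ψ : α → γ} {A : Set α}
    (h : ∀ a ∈ A, f (φ a) = ψ a) (hψ : Set.InjOn ψ A) : Set.BijOn f (φ '' A) (ψ '' A) := by
  have himage : f '' (φ '' A) = ψ '' A := by
    rw [Set.image_image]
    exact Set.image_congr h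
  exact himage ▸ (hψ.congr fun a ha => (h a ha).symm).image_of_comp.bijOn_image

theorem image_setOf_reflTransGen_comap {α β : Type*} {s : β → β → Prop} (φ : α → β)
    (hlift : ∀ a b, s (φ a) b → b ∈ Set.range φ) (a : α) :
    φ '' {b | Relation.ReflTransGen (fun x y => s (φ x) (φ y)) a b} =
      {b | Relation.ReflTransGen s (φ a) b} := by
  ext b
  constructor
  · rintro ⟨b, hb, rfl⟩
    exact hb.lift φ fun _ _ => id
  · intro hb
    induction hb with
    | refl => exact ⟨a, .refl, rfl⟩
    | tail _ hcd ih =>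
      obtain ⟨c, hc, rfl⟩ := ih
      obtain ⟨d, rfl⟩ := hlift c _ hcd
      exact ⟨d, hc.tail hcd, rfl⟩

theorem len_lt_mul_swap {n : ℕ} {w : Pm n} {p q : Fin n} (hpq : p < q) (hw : w p < w q) :
    len w < len (w * swap p q) := by
  set s := swap p q
  -- an inversion `x` of `w` goes to `s x` if `s` keeps it ordered, and stays put otherwise
  let ψ : Fin n × Fin n → Fin n × Fin n := fun x => if s x.1 < s x.2 then (s x.1, s x.2) else x
  have hψ : ∀ x ∈ univ.filter fun x : Fin n × Fin n => x.1 < x.2 ∧ w x.2 < w x.1,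
      ψ x ∈ (univ.filter fun x : Fin n × Fin n => x.1 < x.2 ∧ (w * s) x.2 < (w * s) x.1).erase
        (p, q) := by
    intro x hx
    simp only [mem_erase, mem_filter, mem_univ, true_and, Perm.mul_apply, ψ] at hx ⊢
    split_ifs with h
    · grind [swap_apply_self]
    · simp only [s, swap_apply_def] at h ⊢
      grind
  have hψ_inj : Set.InjOn ψ (univ.filter fun x : Fin n × Fin n => x.1 < x.2 ∧ w x.2 < w x.1) := by
    intro x hx y hy hxy
    simp only [mem_coe, mem_filter, mem_univ, true_and, ψ] at hx hy hxy
    split_ifs at hxy <;> grind [swap_apply_self]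
  calc len w ≤ _ := card_le_card_of_injOn ψ hψ hψ_inj
    _ < len (w * s) := card_erase_lt_of_mem <|
      mem_filter.mpr ⟨mem_univ _, hpq, by simpa [s, swap_apply_left, swap_apply_right] using hw⟩

theorem len_lt_swap_mul_iff {n : ℕ} {w : Pm n} {x y : Fin n} (hxy : x < y) :
    len w < len (swap x y * w) ↔ w⁻¹ x < w⁻¹ y := by
  have key : ∀ w : Pm n, w⁻¹ x < w⁻¹ y → len w < len (swap x y * w) := fun w hw => by
    have := len_lt_mul_swap (w := w) hw (by simpa using hxy)
    rw [mul_swap_eq_swap_mul] at this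
    simpa using this
  refine ⟨fun h => ?_, key w⟩
  by_contra hge
  have hyx : w⁻¹ y < w⁻¹ x := (not_lt.mp hge).lt_of_ne (by simpa using hxy.ne')
  have := key (swap x y * w) (by simpa [swap_apply_left, swap_apply_right] using hyx)
  rw [← mul_assoc, swap_mul_self, one_mul] at this
  exact lt_asymm h this

theorem bEdge_swap_mul_iff {n : ℕ} {w : Pm n} {x y : Fin n} (hxy : x < y) :
    BEdge w (swap x y * w) ↔ w⁻¹ x < w⁻¹ y := by
  rw [BEdge, mul_inv_cancel_right, len_lt_swap_mul_iff hxy]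
  exact and_iff_right ⟨x, y, hxy.ne, rfl⟩

theorem moves_or_moves_iff {α : Type*} [DecidableEq α] {s t : Perm α} (hs : s.IsSwap)
    (ht : t.IsSwap) (hts : t * s ≠ 1) (a : α) : s a ≠ a ∨ t a ≠ a ↔ (t * s) a ≠ a := by
  obtain ⟨x, y, hxy, rfl⟩ := hs
  obtain ⟨z, w, hzw, rfl⟩ := ht
  refine ⟨fun hmoved hfix => ?_, fun h => by contrapose! h; simp [h.1, h.2]⟩
  have : (z = x ∧ w = y) ∨ (z = y ∧ w = x) := by
    simp only [Perm.mul_apply, swap_apply_def] at hmoved hfix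
    grind
  rcases this with ⟨rfl, rfl⟩ | ⟨rfl, rfl⟩
  · exact hts (swap_mul_self _ _)
  · exact hts (by rw [swap_comm, swap_mul_self])

theorem moves_iff_of_bEdge_bEdge {n : ℕ} {x y z : Pm n} (hxz : BEdge x z) (hzy : BEdge z y)
    (a : Fin n) : (z * x⁻¹) a ≠ a ∨ (y * z⁻¹) a ≠ a ↔ (y * x⁻¹) a ≠ a := by
  have hne : y * z⁻¹ * (z * x⁻¹) ≠ 1 := by
    rw [mul_assoc, inv_mul_cancel_left, ne_eq, mul_inv_eq_one]
    rintro rfl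
    exact lt_asymm hxz.2 hzy.2
  rw [moves_or_moves_iff hxz.1 hzy.1 hne, mul_assoc, inv_mul_cancel_left]

section Moves
variable {n h : ℕ} {u v : Pm n}

theorem moves_iff_of_isPath {p : ℕ → Pm n} (hp : IsPath n h u v p) {k : ℕ} (hk : k + 1 < h)
    (a : Fin n) : (∃ j < h, lab p j a ≠ a) ↔
      (∃ j < h, j ≠ k ∧ j ≠ k + 1 ∧ lab p j a ≠ a) ∨ (p (k + 2) * (p k)⁻¹) a ≠ a := by
  rw [← moves_iff_of_bEdge_bEdge (hp.2.2 k (by omega)) (hp.2.2 (k + 1) hk)]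
  constructor
  · rintro ⟨j, hj, hmov⟩
    by_cases hjk : j = k
    · exact .inr (.inl (hjk ▸ hmov))
    by_cases hjk' : j = k + 1
    · exact .inr (.inr (hjk' ▸ hmov))
    exact .inl ⟨j, hj, hjk, hjk', hmov⟩
  · rintro (⟨j, hj, -, -, hmov⟩ | hmov | hmov)
    exacts [⟨j, hj, hmov⟩, ⟨k, by omega, hmov⟩, ⟨k + 1, hk, hmov⟩]

theorem moves_iff_of_flipStep {p q : ℕ → Pm n} (hpq : FlipStep n h u v p q) (a : Fin n) :
    (∃ j < h, lab p j a ≠ a) ↔ (∃ j < h, lab q j a ≠ a) := by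
  obtain ⟨hp, hq, i, hi0, hih, -, hpq⟩ := hpq
  obtain ⟨k, rfl⟩ : ∃ k, i = k + 1 := ⟨i - 1, by omega⟩
  have hlab : ∀ j, j ≠ k → j ≠ k + 1 → lab p j = lab q j := fun j hjk hjk' => by
    rw [lab, lab, hpq j (by omega), hpq (j + 1) (by omega)]
  rw [moves_iff_of_isPath hp hih, moves_iff_of_isPath hq hih, hpq k (by omega),
    hpq (k + 2) (by omega)]
  refine or_congr_left (exists_congr fun j => and_congr_right fun _ => ?_)
  exact and_congr_right fun hjk => and_congr_right fun hjk' => by rw [hlab j hjk hjk']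

theorem moves_iff_of_mem_flipclass {F : Set (ℕ → Pm n)} (hF : IsFlipclass n h u v F)
    {p q : ℕ → Pm n} (hp : p ∈ F) (hq : q ∈ F) (a : Fin n) :
    (∃ j < h, lab p j a ≠ a) ↔ (∃ j < h, lab q j a ≠ a) := by
  obtain ⟨p₀, -, rfl⟩ := hF
  have base : ∀ r ∈ {q | Relation.ReflTransGen (FlipStep n h u v) p₀ q},
      (∃ j < h, lab p₀ j a ≠ a) ↔ (∃ j < h, lab r j a ≠ a) := fun r hr => by
    induction hr with
    | refl => rfl
    | tail _ hstep ih => exact ih.trans (moves_iff_of_flipStep hstep a)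
  exact (base p hp).symm.trans (base q hq)

end Moves

section SwapGraph
variable {α : Type*} [DecidableEq α] (E : Finset α) (t : ℕ → Perm α) (k : ℕ)

theorem sym2_eq_of_swap_eq {a b c d : α} (hab : a ≠ b) (h : swap a b = swap c d) :
    s(a, b) = s(c, d) := by
  have ha := Equiv.congr_fun h a
  have hb := Equiv.congr_fun h b
  simp only [swap_apply_left, swap_apply_right, swap_apply_def] at ha hb
  rw [Sym2.eq_iff]
  grind

def swapGraph : SimpleGraph E where
  Adj a b := (a : α) ≠ b ∧ ∃ i < k, t i = swap (a : α) b
  symm := ⟨fun _ _ ⟨hab, i, hi, hti⟩ => ⟨hab.symm, i, hi, by rw [hti, swap_comm]⟩⟩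
  loopless := ⟨fun _ h => h.1 rfl⟩

variable {E t k}

theorem swapGraph_reachable (hmoved : ∀ i < k, ∀ a, t i a ≠ a → a ∈ E) {a b : α}
    (hab : Relation.ReflTransGen (fun x y => ∃ i < k, t i = swap x y) a b) (ha : a ∈ E)
    (hb : b ∈ E) : (swapGraph E t k).Reachable ⟨a, ha⟩ ⟨b, hb⟩ := by
  induction hab with
  | refl => rfl
  | @tail b c _ hbc ih =>
    obtain ⟨i, hi, hti⟩ := hbc
    by_cases hbc : b = c
    · subst hbc
      exact ih hb
    have hb' : b ∈ E := hmoved i hi b (by simp [hti, swap_apply_left, Ne.symm hbc])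
    exact (ih hb').trans (SimpleGraph.Adj.reachable ⟨hbc, i, hi, hti⟩)

variable (E t k)

theorem card_edgeSet_swapGraph_le : Nat.card (swapGraph E t k).edgeSet ≤ k := by
  have hindex : ∀ e ∈ (swapGraph E t k).edgeSet,
      ∃ i : Fin k, ∀ a b : E, e = s(a, b) → t i = swap (a : α) b := by
    intro e he
    induction e using Sym2.ind with
    | _ a b =>
      obtain ⟨-, i, hi, hti⟩ := he
      refine ⟨⟨i, hi⟩, fun c d hcd => ?_⟩
      rcases Sym2.eq_iff.mp hcd with ⟨rfl, rfl⟩ | ⟨rfl, rfl⟩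
      · exact hti
      · rw [hti, swap_comm]
  choose φ hφ using hindex
  have hφ_inj : Function.Injective fun e : (swapGraph E t k).edgeSet => φ e e.2 := by
    rintro ⟨e₁, he₁⟩ ⟨e₂, he₂⟩ heq
    induction e₁ using Sym2.ind with | _ a b => ?_
    induction e₂ using Sym2.ind with | _ c d => ?_
    have hswap : swap (a : α) b = swap (c : α) d := by
      rw [← hφ _ he₁ a b rfl, ← hφ _ he₂ c d rfl]
      exact congrArg (t ∘ Fin.val) heq
    rw [Subtype.mk.injEq, ← (Sym2.map.injective Subtype.val_injective).eq_iff]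
    simpa using sym2_eq_of_swap_eq he₁.1 hswap
  simpa using Nat.card_le_card_of_injective _ hφ_inj

theorem card_le_of_reflTransGen_swap (hmoved : ∀ i < k, ∀ a, t i a ≠ a → a ∈ E)
    (hconn : ∀ a ∈ E, ∀ b ∈ E, Relation.ReflTransGen (fun x y => ∃ i < k, t i = swap x y) a b) :
    E.card ≤ k + 1 := by
  rcases E.eq_empty_or_nonempty with rfl | ⟨a₀, ha₀⟩
  · simp
  have hG : (swapGraph E t k).Connected :=
    { preconnected := fun a b => swapGraph_reachable hmoved (hconn a a.2 b b.2) a.2 b.2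
      nonempty := ⟨⟨a₀, ha₀⟩⟩ }
  calc E.card = Nat.card E := by simp
    _ ≤ Nat.card (swapGraph E t k).edgeSet + 1 := hG.card_vert_le_card_edgeSet_add_one
    _ ≤ k + 1 := by gcongr; exact card_edgeSet_swapGraph_le E t k

end SwapGraph

theorem card_le_of_irredPath {n h : ℕ} {u v : Pm n} {F : Set (ℕ → Pm n)}
    (hF : IsFlipclass n h u v F) {E : Finset (Fin n)}
    (hE : ∀ a : Fin n, a ∈ E ↔ ∃ p ∈ F, ∃ i, i < h ∧ lab p i a ≠ a)
    {Γ : ℕ → Pm n} (hΓ : Γ ∈ F) (hirr : IrredPath n h Γ) : E.card ≤ h + 1 := by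
  have hmovΓ : ∀ a ∈ E, ∃ j < h, lab Γ j a ≠ a := fun a ha => by
    obtain ⟨p, hp, hmov⟩ := (hE a).1 ha
    exact (moves_iff_of_mem_flipclass hF hp hΓ a).1 hmov
  exact card_le_of_reflTransGen_swap E (lab Γ) h (fun i hi a ha => (hE a).2 ⟨Γ, hΓ, i, hi, ha⟩)
    fun a ha b hb => hirr a b (hmovΓ a ha) (hmovΓ b hb)

section ViaEmbedding
variable {α β : Type*} (ι : α ↪ β)

theorem viaEmbedding_swap [DecidableEq α] [DecidableEq β] (a b : α) :
    (swap a b).viaEmbedding ι = swap (ι a) (ι b) := by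
  ext x
  by_cases hx : x ∈ Set.range ι
  · obtain ⟨c, rfl⟩ := hx
    rw [Perm.viaEmbedding_apply, ι.injective.swap_apply]
  · rw [Perm.viaEmbedding_apply_of_notMem _ _ _ hx, swap_apply_of_ne_of_ne] <;>
      rintro rfl <;> exact hx ⟨_, rfl⟩

theorem mem_range_of_viaEmbedding_apply_ne {σ : Perm α} {x : β} (hx : σ.viaEmbedding ι x ≠ x) :
    x ∈ Set.range ι := by
  by_contra h
  exact hx (Perm.viaEmbedding_apply_of_notMem _ _ _ h)

theorem exists_swap_of_viaEmbedding_eq_swap [DecidableEq α] [DecidableEq β] {σ : Perm α} {x y : β}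
    (hxy : x ≠ y) (hσ : σ.viaEmbedding ι = swap x y) :
    ∃ a b, ι a = x ∧ ι b = y ∧ σ = swap a b := by
  obtain ⟨a, rfl⟩ := mem_range_of_viaEmbedding_apply_ne ι (σ := σ) (x := x) (by simp [hσ, hxy.symm])
  obtain ⟨b, rfl⟩ := mem_range_of_viaEmbedding_apply_ne ι (σ := σ) (x := y) (by simp [hσ, hxy])
  refine ⟨a, b, rfl, rfl, Perm.viaEmbeddingHom_injective ι ?_⟩
  simp [Perm.viaEmbeddingHom_apply, hσ, viaEmbedding_swap]

noncomputable def cosetEmb (u : Perm β) (τ : Perm α) : Perm β := τ.viaEmbedding ι * u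

variable {ι} {u : Perm β}

theorem cosetEmb_injective : Function.Injective (cosetEmb ι u) :=
  fun _ _ h => Perm.viaEmbeddingHom_injective ι (mul_right_cancel h)

theorem cosetEmb_one : cosetEmb ι u 1 = u := by
  simp [cosetEmb, ← Perm.viaEmbeddingHom_apply]

theorem cosetEmb_mul (σ τ : Perm α) :
    cosetEmb ι u (σ * τ) = σ.viaEmbedding ι * cosetEmb ι u τ := by
  simp [cosetEmb, ← Perm.viaEmbeddingHom_apply, mul_assoc]

theorem cosetEmb_mul_inv (σ τ : Perm α) :
    cosetEmb ι u σ * (cosetEmb ι u τ)⁻¹ = (σ * τ⁻¹).viaEmbedding ι := by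
  simp [cosetEmb, ← Perm.viaEmbeddingHom_apply, mul_assoc]

theorem cosetEmb_inv_apply (τ : Perm α) (a : α) :
    (cosetEmb ι u τ)⁻¹ (ι a) = u⁻¹ (ι (τ⁻¹ a)) := by
  rw [cosetEmb, mul_inv_rev, Perm.mul_apply, ← Perm.viaEmbeddingHom_apply, ← map_inv,
    Perm.viaEmbeddingHom_apply, Perm.viaEmbedding_apply]

end ViaEmbedding

section Lift
variable {α : Type*} [DecidableEq α] {N h : ℕ} {ι : α ↪ Fin N} {u : Pm N}

theorem exists_cosetEmb_of_bEdge_bEdge {τ τ' : Perm α} {z : Pm N}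
    (h₁ : BEdge (cosetEmb ι u τ) z) (h₂ : BEdge z (cosetEmb ι u τ')) :
    ∃ σ, z = cosetEmb ι u σ := by
  obtain ⟨x, y, hxy, hz⟩ := h₁.1
  have hrange : ∀ c, (z * (cosetEmb ι u τ)⁻¹) c ≠ c → c ∈ Set.range ι := fun c hc =>
    mem_range_of_viaEmbedding_apply_ne ι (σ := τ' * τ⁻¹) <| by
      rw [← cosetEmb_mul_inv, ← moves_iff_of_bEdge_bEdge h₁ h₂]
      exact .inl hc
  obtain ⟨a, rfl⟩ := hrange x (by simp [hz, hxy.symm])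
  obtain ⟨b, rfl⟩ := hrange y (by simp [hz, hxy])
  exact ⟨swap a b * τ, by rw [cosetEmb_mul, viaEmbedding_swap, ← hz, inv_mul_cancel_right]⟩

theorem exists_eq_comp_of_flipStep {u₀ v₀ : Pm N} {π : ℕ → Perm α} {q : ℕ → Pm N}
    (hstep : FlipStep N h u₀ v₀ (cosetEmb ι u ∘ π) q) : ∃ π', q = cosetEmb ι u ∘ π' := by
  obtain ⟨-, hq, i, hi0, hih, -, hpq⟩ := hstep
  obtain ⟨k, rfl⟩ : ∃ k, i = k + 1 := ⟨i - 1, by omega⟩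
  have h₁ := hq.2.2 k (by omega)
  have h₂ := hq.2.2 (k + 1) hih
  rw [← hpq k (by omega)] at h₁
  rw [← hpq (k + 1 + 1) (by omega)] at h₂
  obtain ⟨σ, hσ⟩ := exists_cosetEmb_of_bEdge_bEdge h₁ h₂
  refine ⟨Function.update π (k + 1) σ, funext fun j => ?_⟩
  by_cases hj : j = k + 1
  · subst hj
    simp [hσ]
  · simp [Function.update_of_ne hj, ← hpq j hj]

theorem exists_eq_comp_of_isPath {v : Pm N} {p : ℕ → Pm N} (hp : IsPath N h u v p)
    (hsupp : ∀ i < h, ∀ x, lab p i x ≠ x → x ∈ Set.range ι) :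
    ∃ π : ℕ → Perm α, p = cosetEmb ι u ∘ π := by
  have hvert : ∀ j, ∃ τ, p j = cosetEmb ι u τ := by
    intro j
    induction j with
    | zero => exact ⟨1, by rw [hp.1, cosetEmb_one]⟩
    | succ j ih =>
      obtain ⟨τ, hτ⟩ := ih
      by_cases hj : j < h
      · obtain ⟨x, y, hxy, hlab⟩ := (hp.2.2 j hj).1
        obtain ⟨a, rfl⟩ := hsupp j hj x (by simp [lab, hlab, hxy.symm])
        obtain ⟨b, rfl⟩ := hsupp j hj y (by simp [lab, hlab, hxy])
        refine ⟨swap a b * τ, ?_⟩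
        rw [cosetEmb_mul, viaEmbedding_swap, ← hlab, ← hτ, inv_mul_cancel_right]
      · exact ⟨τ, by rw [hp.2.1 (j + 1) (by omega), ← hp.2.1 j (by omega), hτ]⟩
  choose π hπ using hvert
  exact ⟨π, funext hπ⟩

theorem setOf_reflTransGen_flipStep_eq_image {u₀ v₀ : Pm N} (π₀ : ℕ → Perm α) :
    {q | Relation.ReflTransGen (FlipStep N h u₀ v₀) (cosetEmb ι u ∘ π₀) q} =
      (cosetEmb ι u ∘ ·) '' {π | Relation.ReflTransGen
        (fun π π' => FlipStep N h u₀ v₀ (cosetEmb ι u ∘ π) (cosetEmb ι u ∘ π')) π₀ π} :=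
  (image_setOf_reflTransGen_comap _
    (fun _ _ hstep => (exists_eq_comp_of_flipStep hstep).imp fun _ => Eq.symm) π₀).symm

end Lift

theorem flipAt_comp_iff {e N : ℕ} {φ : Pm e → Pm N} (hφ : Function.Injective φ) {h i : ℕ}
    {π π' : ℕ → Pm e} : FlipAt h i (φ ∘ π) (φ ∘ π') ↔ FlipAt h i π π' := by
  simp only [FlipAt, Function.comp_apply, hφ.ne_iff, hφ.eq_iff]

theorem SV_image_comp {e N h : ℕ} (φ : Pm e → Pm N) (S : Set (ℕ → Pm e)) :
    SV N h ((φ ∘ ·) '' S) = φ '' SV e h S := by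
  ext x
  constructor
  · rintro ⟨_, ⟨π, hπ, rfl⟩, i, hi, rfl⟩
    exact ⟨π i, ⟨π, hπ, i, hi, rfl⟩, rfl⟩
  · rintro ⟨_, ⟨π, hπ, i, hi, rfl⟩, rfl⟩
    exact ⟨φ ∘ π, ⟨π, hπ, rfl⟩, i, hi, rfl⟩

theorem lab_comp_cosetEmb {e N : ℕ} (ι : Fin e ↪ Fin N) (u : Pm N) (π : ℕ → Pm e) (i : ℕ) :
    lab (cosetEmb ι u ∘ π) i = (lab π i).viaEmbedding ι :=
  cosetEmb_mul_inv _ _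

theorem labelSet_image_cosetEmb {e N h : ℕ} (ι : Fin e ↪ Fin N) (u : Pm N)
    (S : Set (ℕ → Pm e)) :
    labelSet N h ((cosetEmb ι u ∘ ·) '' S) = (·.viaEmbedding ι) '' labelSet e h S := by
  ext t
  constructor
  · rintro ⟨_, ⟨π, hπ, rfl⟩, i, hi, rfl⟩
    exact ⟨lab π i, ⟨π, hπ, i, hi, rfl⟩, (lab_comp_cosetEmb ι u π i).symm⟩
  · rintro ⟨_, ⟨π, hπ, i, hi, rfl⟩, rfl⟩
    exact ⟨_, ⟨π, hπ, rfl⟩, i, hi, lab_comp_cosetEmb ι u π i⟩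

section OrderEmbedding
variable {e N : ℕ} (ι : Fin e ↪o Fin N) {u : Pm N}

theorem bEdge_cosetEmb_swap_mul_iff {τ : Pm e} {a b : Fin e} (hab : a < b) :
    BEdge (cosetEmb ι.toEmbedding u τ) (cosetEmb ι.toEmbedding u (swap a b * τ)) ↔
      u⁻¹ (ι (τ⁻¹ a)) < u⁻¹ (ι (τ⁻¹ b)) := by
  rw [cosetEmb_mul, viaEmbedding_swap,
    bEdge_swap_mul_iff (show ι.toEmbedding a < ι.toEmbedding b from ι.lt_iff_lt.2 hab),
    cosetEmb_inv_apply, cosetEmb_inv_apply]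
  rfl

theorem bEdge_cosetEmb_iff {τ τ' : Pm e} :
    BEdge (cosetEmb ι.toEmbedding u τ) (cosetEmb ι.toEmbedding u τ') ↔
      ∃ a b, a < b ∧ τ' = swap a b * τ ∧ u⁻¹ (ι (τ⁻¹ a)) < u⁻¹ (ι (τ⁻¹ b)) := by
  refine ⟨fun hedge => ?_, fun ⟨a, b, hab, hτ', hlt⟩ => ?_⟩
  · obtain ⟨x, y, hxy, hswap⟩ := hedge.1
    rw [cosetEmb_mul_inv] at hswap
    obtain ⟨a, b, rfl, rfl, hτ⟩ := exists_swap_of_viaEmbedding_eq_swap _ hxy hswap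
    rw [eq_comm, eq_mul_inv_iff_mul_eq, eq_comm] at hτ
    rcases lt_or_gt_of_ne (ι.injective.ne_iff.1 hxy) with hab | hba
    · exact ⟨a, b, hab, hτ, (bEdge_cosetEmb_swap_mul_iff ι hab).1 (hτ ▸ hedge)⟩
    · rw [swap_comm] at hτ
      exact ⟨b, a, hba, hτ, (bEdge_cosetEmb_swap_mul_iff ι hba).1 (hτ ▸ hedge)⟩
  · exact hτ' ▸ (bEdge_cosetEmb_swap_mul_iff ι hab).2 hlt

def SamePattern {m : ℕ} (u : Pm N) (ι' : Fin e ↪o Fin m) (u' : Pm m) : Prop :=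
  ∀ a b, u⁻¹ (ι a) < u⁻¹ (ι b) ↔ u'⁻¹ (ι' a) < u'⁻¹ (ι' b)

theorem exists_samePattern {m : ℕ} (u : Pm N) (ι' : Fin e ↪o Fin m) :
    ∃ u' : Pm m, SamePattern ι u ι' u' := by
  -- `u'⁻¹ ∘ ι'` is the standardization of the word `u⁻¹ ∘ ι`
  set g : Fin e → Fin N := fun a => u⁻¹ (ι a)
  have hsort : StrictMono (g ∘ Tuple.sort g) :=
    (Tuple.monotone_sort g).strictMono_of_injective
      ((u⁻¹.injective.comp ι.injective).comp (Tuple.sort g).injective)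
  refine ⟨(Tuple.sort g).viaEmbedding ι'.toEmbedding, fun a b => ?_⟩
  rw [← Perm.viaEmbeddingHom_apply, ← map_inv, Perm.viaEmbeddingHom_apply]
  simp only [← RelEmbedding.coe_toEmbedding, Perm.viaEmbedding_apply]
  simpa [g, ι'.lt_iff_lt] using
    hsort.lt_iff_lt (a := (Tuple.sort g)⁻¹ a) (b := (Tuple.sort g)⁻¹ b)

theorem bEdge_cosetEmb_iff_of_samePattern {m : ℕ} {ι' : Fin e ↪o Fin m} {u' : Pm m}
    (hpat : SamePattern ι u ι' u') {τ τ' : Pm e} :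
    BEdge (cosetEmb ι.toEmbedding u τ) (cosetEmb ι.toEmbedding u τ') ↔
      BEdge (cosetEmb ι'.toEmbedding u' τ) (cosetEmb ι'.toEmbedding u' τ') := by
  simp only [bEdge_cosetEmb_iff, hpat _ _]

theorem lexLe_viaEmbedding_iff {σ σ' : Pm e} :
    lexLe N (σ.viaEmbedding ι.toEmbedding) (σ'.viaEmbedding ι.toEmbedding) ↔ lexLe e σ σ' := by
  constructor
  · rintro ⟨x, y, z, w, hxy, hzw, hσ, hσ', hord⟩
    obtain ⟨a, b, rfl, rfl, rfl⟩ := exists_swap_of_viaEmbedding_eq_swap _ hxy.ne hσ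
    obtain ⟨c, d, rfl, rfl, rfl⟩ := exists_swap_of_viaEmbedding_eq_swap _ hzw.ne hσ'
    simp only [RelEmbedding.coe_toEmbedding, ι.lt_iff_lt, ι.le_iff_le, ι.injective.eq_iff]
      at hxy hzw hord
    exact ⟨a, b, c, d, hxy, hzw, rfl, rfl, hord⟩
  · rintro ⟨a, b, c, d, hab, hcd, rfl, rfl, hord⟩
    refine ⟨ι a, ι b, ι c, ι d, ι.lt_iff_lt.2 hab, ι.lt_iff_lt.2 hcd, viaEmbedding_swap _ _ _,
      viaEmbedding_swap _ _ _, ?_⟩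
    simpa [ι.lt_iff_lt, ι.le_iff_le, ι.injective.eq_iff] using hord

end OrderEmbedding

section SamePattern
variable {e n m h : ℕ} {ι : Fin e ↪o Fin n} {u : Pm n} {ι' : Fin e ↪o Fin m} {u' : Pm m}

theorem isPath_comp_iff_of_samePattern (hpat : SamePattern ι u ι' u') {τ : Pm e}
    {π : ℕ → Pm e} :
    IsPath n h u (cosetEmb ι.toEmbedding u τ) (cosetEmb ι.toEmbedding u ∘ π) ↔
      IsPath m h u' (cosetEmb ι'.toEmbedding u' τ) (cosetEmb ι'.toEmbedding u' ∘ π) := by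
  simp only [IsPath, Function.comp_apply, cosetEmb_injective.eq_iff' cosetEmb_one,
    cosetEmb_injective.eq_iff, bEdge_cosetEmb_iff_of_samePattern ι hpat]

theorem flipStep_comp_iff_of_samePattern (hpat : SamePattern ι u ι' u') {τ : Pm e}
    {π π' : ℕ → Pm e} :
    FlipStep n h u (cosetEmb ι.toEmbedding u τ) (cosetEmb ι.toEmbedding u ∘ π)
        (cosetEmb ι.toEmbedding u ∘ π') ↔
      FlipStep m h u' (cosetEmb ι'.toEmbedding u' τ) (cosetEmb ι'.toEmbedding u' ∘ π)
        (cosetEmb ι'.toEmbedding u' ∘ π') := by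
  simp only [FlipStep, isPath_comp_iff_of_samePattern hpat, flipAt_comp_iff cosetEmb_injective]

end SamePattern

theorem flipclassIso_image_cosetEmb {e n m h : ℕ} (ι : Fin e ↪o Fin n) (u : Pm n)
    (ι' : Fin e ↪o Fin m) (u' : Pm m) (S : Set (ℕ → Pm e)) :
    FlipclassIso n m h ((cosetEmb ι.toEmbedding u ∘ ·) '' S)
      ((cosetEmb ι'.toEmbedding u' ∘ ·) '' S) := by
  set Φ := cosetEmb ι.toEmbedding u
  set Ψ := cosetEmb ι'.toEmbedding u'
  set f := Ψ ∘ Function.invFun Φ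
  set g := (fun σ : Pm e => σ.viaEmbedding ι'.toEmbedding) ∘
    Function.invFun (fun σ : Pm e => σ.viaEmbedding ι.toEmbedding)
  have hf : ∀ τ, f (Φ τ) = Ψ τ := fun τ =>
    congrArg Ψ (Function.leftInverse_invFun (f := Φ) cosetEmb_injective τ)
  have hfπ : ∀ π : ℕ → Pm e, f ∘ (Φ ∘ π) = Ψ ∘ π := fun π => funext fun j => hf (π j)
  have hg : ∀ σ : Pm e, g (σ.viaEmbedding ι.toEmbedding) = σ.viaEmbedding ι'.toEmbedding :=
    fun σ => congrArg (·.viaEmbedding ι'.toEmbedding)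
      (Function.leftInverse_invFun (Perm.viaEmbeddingHom_injective ι.toEmbedding) σ)
  refine ⟨f, g, ?_, ?_, ?_, ?_, ?_, ?_⟩
  · rw [SV_image_comp, SV_image_comp]
    exact bijOn_image_of_comp_eq (fun τ _ => hf τ) cosetEmb_injective.injOn
  · exact bijOn_image_of_comp_eq (fun π _ => hfπ π) cosetEmb_injective.comp_left.injOn
  · rintro _ ⟨π, -, rfl⟩ _ ⟨π', -, rfl⟩ i hflip
    rw [hfπ, hfπ, flipAt_comp_iff cosetEmb_injective]
    exact (flipAt_comp_iff cosetEmb_injective).1 hflip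
  · rw [labelSet_image_cosetEmb, labelSet_image_cosetEmb]
    exact bijOn_image_of_comp_eq (fun σ _ => hg σ)
      (Perm.viaEmbeddingHom_injective ι'.toEmbedding).injOn
  · rintro _ ⟨π, -, rfl⟩ i -
    rw [hfπ, lab_comp_cosetEmb, lab_comp_cosetEmb, hg]
  · rw [labelSet_image_cosetEmb]
    rintro _ _ ⟨σ, -, rfl⟩ ⟨σ', -, rfl⟩ hlex
    rw [hg, hg]
    exact (lexLe_viaEmbedding_iff ι').2 ((lexLe_viaEmbedding_iff ι).1 hlex)

theorem exists_flipclassIso_of_samePattern {e n m h : ℕ} {ι : Fin e ↪o Fin n} {u v : Pm n}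
    {ι' : Fin e ↪o Fin m} {u' : Pm m} (hpat : SamePattern ι u ι' u') {F : Set (ℕ → Pm n)}
    (hF : IsFlipclass n h u v F) (hsupp : ∀ p ∈ F, ∀ i < h, ∀ x, lab p i x ≠ x → x ∈ Set.range ι) :
    ∃ v' F', IsFlipclass m h u' v' F' ∧ FlipclassIso n m h F F' := by
  obtain ⟨p₀, hp₀, rfl⟩ := hF
  obtain ⟨π₀, rfl⟩ := exists_eq_comp_of_isPath hp₀ (hsupp _ .refl)
  obtain rfl : cosetEmb ι.toEmbedding u (π₀ h) = v := hp₀.2.1 h le_rfl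
  refine ⟨_, _, ⟨_, (isPath_comp_iff_of_samePattern hpat).1 hp₀, rfl⟩, ?_⟩
  rw [setOf_reflTransGen_flipStep_eq_image, setOf_reflTransGen_flipStep_eq_image]
  simp only [flipStep_comp_iff_of_samePattern hpat]
  exact flipclassIso_image_cosetEmb ι u ι' u' _

theorem exists_flipclassIso_of_card_le {n h m : ℕ} {u v : Pm n} {F : Set (ℕ → Pm n)}
    (hF : IsFlipclass n h u v F) {E : Finset (Fin n)}
    (hE : ∀ a : Fin n, (∃ p ∈ F, ∃ i, i < h ∧ lab p i a ≠ a) → a ∈ E) (hm : E.card ≤ m) :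
    ∃ u' v' : Pm m, ∃ F' : Set (ℕ → Pm m), IsFlipclass m h u' v' F' ∧ FlipclassIso n m h F F' := by
  obtain ⟨u', hu'⟩ := exists_samePattern (E.orderEmbOfFin rfl) u (Fin.castLEOrderEmb hm)
  obtain ⟨v', F', hF', hiso⟩ := exists_flipclassIso_of_samePattern hu' hF
    fun p hp i hi x hx => by
      rw [range_orderEmbOfFin]
      exact hE x ⟨p, hp, i, hi, hx⟩
  exact ⟨u', v', F', hF', hiso⟩

/-- Theorem: an `h`-flipclass `F` of `𝔖ₙ` with `e = |E(F)|` is isomorphic to an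
`h`-flipclass of `𝔖ₑ`; in particular, if `F` is irreducible then `e ≤ h+1` and `F` is
isomorphic to an `h`-flipclass of `𝔖_{h+1}`. -/
theorem flipclass_in_Se (n h : ℕ) (u v : Pm n) (F : Set (ℕ → Pm n))
    (hF : IsFlipclass n h u v F) (E : Finset (Fin n))
    (hE : ∀ a : Fin n, a ∈ E ↔ ∃ p ∈ F, ∃ i, i < h ∧ lab p i a ≠ a) :
    (∃ u' v' : Pm E.card, ∃ F' : Set (ℕ → Pm E.card),
      IsFlipclass E.card h u' v' F' ∧ FlipclassIso n E.card h F F') ∧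
    ((∃ Γ ∈ F, IrredPath n h Γ) →
      E.card ≤ h + 1 ∧
      ∃ u' v' : Pm (h + 1), ∃ F' : Set (ℕ → Pm (h + 1)),
        IsFlipclass (h + 1) h u' v' F' ∧ FlipclassIso n (h + 1) h F F') := by
  refine ⟨exists_flipclassIso_of_card_le hF (fun a => (hE a).2) le_rfl, fun ⟨Γ, hΓ, hirr⟩ => ?_⟩
  have hcard := card_le_of_irredPath hF hE hΓ hirr
  exact ⟨hcard, exists_flipclassIso_of_card_le hF (fun a => (hE a).2) hcard⟩
end
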